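/- arXiv:2112.15073 — 5 statements merged into one kernel-verified Lean document; each statement's English description precedes it below -/
import Mathlib

section
/- The μ-norm satisfies the triangle inequality: for any two bounded operators W₁ and W₂ on L²(𝒳, μ), ‖W₁ + W₂‖_μ ≤ ‖W₁‖_μ + ‖W₂‖_μ. -/
open MeasureTheory

namespace MuNorm

variable {𝒳 : Type*} [MeasurableSpace 𝒳]

/-- A finite measurable partition of `𝒳` (up to measure zero). -/
structure Partition (μ : Measure 𝒳) where
  J : ℕ
  Y : Fin J → Set 𝒳
  meas : ∀ j, MeasurableSet (Y j)
  cover : μ (Set.univ \ ⋃ j, Y j) = 0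
  disj : ∀ j k, j ≠ k → μ (Y j ∩ Y k) = 0

/-- `ℳ_χ(W) = ∑_j μ(Y_j) ‖W π_{Y_j}‖²`. -/
noncomputable def M (μ : Measure 𝒳)
    (proj : Set 𝒳 → (Lp ℂ 2 μ →L[ℂ] Lp ℂ 2 μ))
    (W : Lp ℂ 2 μ →L[ℂ] Lp ℂ 2 μ) (χ : Partition μ) : ℝ :=
  ∑ j, (μ (χ.Y j)).toReal * ‖W.comp (proj (χ.Y j))‖ ^ 2

/-- `‖W‖_μ = inf_χ sqrt(ℳ_χ(W))`. -/
noncomputable def munorm (μ : Measure 𝒳)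
    (proj : Set 𝒳 → (Lp ℂ 2 μ →L[ℂ] Lp ℂ 2 μ))
    (W : Lp ℂ 2 μ →L[ℂ] Lp ℂ 2 μ) : ℝ :=
  ⨅ χ : Partition μ, Real.sqrt (M μ proj W χ)

/-- `proj Y` is the operator of multiplication by the indicator of `Y`. -/
def IsIndicatorProj (μ : Measure 𝒳)
    (proj : Set 𝒳 → (Lp ℂ 2 μ →L[ℂ] Lp ℂ 2 μ)) : Prop :=
  ∀ Y : Set 𝒳, MeasurableSet Y → ∀ f : Lp ℂ 2 μ,
    (proj Y f : 𝒳 → ℂ) =ᵐ[μ] Y.indicator f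

/-! ### Auxiliary lemmas -/

instance (μ : Measure 𝒳) : Nonempty (Partition μ) :=
  ⟨⟨1, fun _ => Set.univ, fun _ => MeasurableSet.univ, by rw [Set.iUnion_const]; simp,
    fun j k h => absurd (Subsingleton.elim j k) h⟩⟩

lemma M_nonneg (μ : Measure 𝒳) (proj : Set 𝒳 → (Lp ℂ 2 μ →L[ℂ] Lp ℂ 2 μ))
    (W : Lp ℂ 2 μ →L[ℂ] Lp ℂ 2 μ) (χ : Partition μ) : 0 ≤ M μ proj W χ :=
  Finset.sum_nonneg fun _ _ => mul_nonneg ENNReal.toReal_nonneg (sq_nonneg _)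

lemma norm_proj_apply_le {μ : Measure 𝒳} {proj : Set 𝒳 → (Lp ℂ 2 μ →L[ℂ] Lp ℂ 2 μ)}
    (hproj : IsIndicatorProj μ proj) {Y : Set 𝒳} (hY : MeasurableSet Y) (f : Lp ℂ 2 μ) :
    ‖proj Y f‖ ≤ ‖f‖ := by
  rw [Lp.norm_def, Lp.norm_def, eLpNorm_congr_ae (hproj Y hY f)]
  exact ENNReal.toReal_mono (Lp.eLpNorm_ne_top f) (eLpNorm_indicator_le _)

lemma proj_proj {μ : Measure 𝒳} {proj : Set 𝒳 → (Lp ℂ 2 μ →L[ℂ] Lp ℂ 2 μ)}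
    (hproj : IsIndicatorProj μ proj) {A S : Set 𝒳} (hA : MeasurableSet A)
    (hS : MeasurableSet S) (hSA : S ⊆ A) (f : Lp ℂ 2 μ) :
    proj A (proj S f) = proj S f := by
  apply Lp.ext
  have h1 := hproj A hA (proj S f)
  have h2 := hproj S hS f
  have h3 : A.indicator (⇑(proj S f)) =ᵐ[μ] A.indicator (S.indicator ⇑f) := by
    filter_upwards [h2] with x hx
    simp [Set.indicator, hx]
  refine (h1.trans (h3.trans ?_)).trans h2.symm
  rw [Set.indicator_indicator, Set.inter_eq_self_of_subset_right hSA]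

lemma opnorm_comp_proj_le {μ : Measure 𝒳} {proj : Set 𝒳 → (Lp ℂ 2 μ →L[ℂ] Lp ℂ 2 μ)}
    (hproj : IsIndicatorProj μ proj) {A S : Set 𝒳} (hA : MeasurableSet A)
    (hS : MeasurableSet S) (hSA : S ⊆ A) (W : Lp ℂ 2 μ →L[ℂ] Lp ℂ 2 μ) :
    ‖W.comp (proj S)‖ ≤ ‖W.comp (proj A)‖ := by
  refine ContinuousLinearMap.opNorm_le_bound _ (norm_nonneg _) fun f => ?_
  simp only [ContinuousLinearMap.comp_apply]
  rw [← proj_proj hproj hA hS hSA f]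
  calc ‖W (proj A (proj S f))‖ ≤ ‖W.comp (proj A)‖ * ‖proj S f‖ :=
        (W.comp (proj A)).le_opNorm _
    _ ≤ ‖W.comp (proj A)‖ * ‖f‖ :=
        mul_le_mul_of_nonneg_left (norm_proj_apply_le hproj hS f) (norm_nonneg _)

/-- Common refinement of two partitions. -/
noncomputable def Partition.refine {μ : Measure 𝒳} (χ₁ χ₂ : Partition μ) : Partition μ where
  J := χ₁.J * χ₂.J
  Y i := χ₁.Y (finProdFinEquiv.symm i).1 ∩ χ₂.Y (finProdFinEquiv.symm i).2
  meas i := (χ₁.meas _).inter (χ₂.meas _)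
  cover := by
    refine measure_mono_null (fun x hx => ?_) (measure_union_null χ₁.cover χ₂.cover)
    obtain ⟨-, hx⟩ := hx
    simp only [Set.mem_iUnion, Set.mem_inter_iff, not_exists] at hx
    by_contra h
    simp only [Set.mem_union, Set.mem_diff, Set.mem_univ, true_and, not_or, not_not] at h
    obtain ⟨h1, h2⟩ := h
    obtain ⟨j, hj⟩ := Set.mem_iUnion.1 h1
    obtain ⟨k, hk⟩ := Set.mem_iUnion.1 h2
    exact hx (finProdFinEquiv (j, k)) (by simpa using ⟨hj, hk⟩)
  disj i k h := by
    set p := finProdFinEquiv.symm i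
    set q := finProdFinEquiv.symm k
    have hpq : p ≠ q := fun hc => h (finProdFinEquiv.symm.injective hc)
    have hor : p.1 ≠ q.1 ∨ p.2 ≠ q.2 := by
      by_contra hc
      push_neg at hc
      exact hpq (Prod.ext hc.1 hc.2)
    rcases hor with h1 | h2
    · refine measure_mono_null (fun x hx => ?_) (χ₁.disj _ _ h1)
      exact ⟨hx.1.1, hx.2.1⟩
    · refine measure_mono_null (fun x hx => ?_) (χ₂.disj _ _ h2)
      exact ⟨hx.1.2, hx.2.2⟩

lemma sum_measure_inter_le {μ : Measure 𝒳} [IsProbabilityMeasure μ]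
    (χ₂ : Partition μ) {A : Set 𝒳} (hA : MeasurableSet A) :
    ∑ k, (μ (A ∩ χ₂.Y k)).toReal ≤ (μ A).toReal := by
  rw [← ENNReal.toReal_sum (fun k _ => measure_ne_top μ _)]
  refine ENNReal.toReal_mono (measure_ne_top μ _) ?_
  rw [← measure_biUnion_finset₀ (f := fun k => A ∩ χ₂.Y k)
    (fun j _ k _ hjk => measure_mono_null
      (fun x hx => (Set.mem_inter hx.1.2 hx.2.2 : x ∈ χ₂.Y j ∩ χ₂.Y k)) (χ₂.disj j k hjk))
    (fun k _ => ((hA.inter (χ₂.meas k)).nullMeasurableSet))]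
  exact measure_mono (by simp [Set.iUnion_subset_iff, Set.inter_subset_left])

lemma M_refine_le_left {μ : Measure 𝒳} [IsProbabilityMeasure μ]
    {proj : Set 𝒳 → (Lp ℂ 2 μ →L[ℂ] Lp ℂ 2 μ)} (hproj : IsIndicatorProj μ proj)
    (W : Lp ℂ 2 μ →L[ℂ] Lp ℂ 2 μ) (χ₁ χ₂ : Partition μ) :
    M μ proj W (χ₁.refine χ₂) ≤ M μ proj W χ₁ := by
  have step1 : M μ proj W (χ₁.refine χ₂) ≤
      ∑ i : Fin (χ₁.J * χ₂.J),
        (μ (χ₁.Y (finProdFinEquiv.symm i).1 ∩ χ₂.Y (finProdFinEquiv.symm i).2)).toReal *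
          ‖W.comp (proj (χ₁.Y (finProdFinEquiv.symm i).1))‖ ^ 2 := by
    refine Finset.sum_le_sum fun i _ => ?_
    refine mul_le_mul_of_nonneg_left ?_ ENNReal.toReal_nonneg
    exact pow_le_pow_left₀ (norm_nonneg _)
      (opnorm_comp_proj_le hproj (χ₁.meas _) ((χ₁.meas _).inter (χ₂.meas _))
        Set.inter_subset_left W) 2
  refine step1.trans ?_
  have hsum : (∑ i : Fin (χ₁.J * χ₂.J),
      (μ (χ₁.Y (finProdFinEquiv.symm i).1 ∩ χ₂.Y (finProdFinEquiv.symm i).2)).toReal *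
        ‖W.comp (proj (χ₁.Y (finProdFinEquiv.symm i).1))‖ ^ 2)
      = ∑ p : Fin χ₁.J × Fin χ₂.J,
        (μ (χ₁.Y p.1 ∩ χ₂.Y p.2)).toReal * ‖W.comp (proj (χ₁.Y p.1))‖ ^ 2 :=
    Fintype.sum_equiv finProdFinEquiv.symm _ _ (fun i => rfl)
  rw [hsum, Fintype.sum_prod_type]
  refine Finset.sum_le_sum fun j _ => ?_
  show (∑ k, (μ (χ₁.Y j ∩ χ₂.Y k)).toReal * ‖W.comp (proj (χ₁.Y j))‖ ^ 2) ≤ _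
  rw [← Finset.sum_mul]
  exact mul_le_mul_of_nonneg_right (sum_measure_inter_le χ₂ (χ₁.meas j)) (sq_nonneg _)

lemma M_refine_le_right {μ : Measure 𝒳} [IsProbabilityMeasure μ]
    {proj : Set 𝒳 → (Lp ℂ 2 μ →L[ℂ] Lp ℂ 2 μ)} (hproj : IsIndicatorProj μ proj)
    (W : Lp ℂ 2 μ →L[ℂ] Lp ℂ 2 μ) (χ₁ χ₂ : Partition μ) :
    M μ proj W (χ₁.refine χ₂) ≤ M μ proj W χ₂ := by
  have step1 : M μ proj W (χ₁.refine χ₂) ≤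
      ∑ i : Fin (χ₁.J * χ₂.J),
        (μ (χ₁.Y (finProdFinEquiv.symm i).1 ∩ χ₂.Y (finProdFinEquiv.symm i).2)).toReal *
          ‖W.comp (proj (χ₂.Y (finProdFinEquiv.symm i).2))‖ ^ 2 := by
    refine Finset.sum_le_sum fun i _ => ?_
    refine mul_le_mul_of_nonneg_left ?_ ENNReal.toReal_nonneg
    exact pow_le_pow_left₀ (norm_nonneg _)
      (opnorm_comp_proj_le hproj (χ₂.meas _) ((χ₁.meas _).inter (χ₂.meas _))
        Set.inter_subset_right W) 2
  refine step1.trans ?_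
  have hsum : (∑ i : Fin (χ₁.J * χ₂.J),
      (μ (χ₁.Y (finProdFinEquiv.symm i).1 ∩ χ₂.Y (finProdFinEquiv.symm i).2)).toReal *
        ‖W.comp (proj (χ₂.Y (finProdFinEquiv.symm i).2))‖ ^ 2)
      = ∑ p : Fin χ₁.J × Fin χ₂.J,
        (μ (χ₁.Y p.1 ∩ χ₂.Y p.2)).toReal * ‖W.comp (proj (χ₂.Y p.2))‖ ^ 2 :=
    Fintype.sum_equiv finProdFinEquiv.symm _ _ (fun i => rfl)
  rw [hsum, Fintype.sum_prod_type_right]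
  refine Finset.sum_le_sum fun k _ => ?_
  show (∑ j, (μ (χ₁.Y j ∩ χ₂.Y k)).toReal * ‖W.comp (proj (χ₂.Y k))‖ ^ 2) ≤ _
  rw [← Finset.sum_mul]
  refine mul_le_mul_of_nonneg_right ?_ (sq_nonneg _)
  have : ∀ j, μ (χ₁.Y j ∩ χ₂.Y k) = μ (χ₂.Y k ∩ χ₁.Y j) := fun j => by rw [Set.inter_comm]
  simp_rw [this]
  exact sum_measure_inter_le χ₁ (χ₂.meas k)

lemma sqrt_M_add_le {μ : Measure 𝒳} (proj : Set 𝒳 → (Lp ℂ 2 μ →L[ℂ] Lp ℂ 2 μ))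
    (W₁ W₂ : Lp ℂ 2 μ →L[ℂ] Lp ℂ 2 μ) (χ : Partition μ) :
    Real.sqrt (M μ proj (W₁ + W₂) χ) ≤
      Real.sqrt (M μ proj W₁ χ) + Real.sqrt (M μ proj W₂ χ) := by
  set w : Fin χ.J → ℝ := fun j => (μ (χ.Y j)).toReal with hw
  set a : Fin χ.J → ℝ := fun j => ‖W₁.comp (proj (χ.Y j))‖ with ha
  set b : Fin χ.J → ℝ := fun j => ‖W₂.comp (proj (χ.Y j))‖ with hb
  have hw0 : ∀ j, 0 ≤ w j := fun j => ENNReal.toReal_nonneg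
  have key : M μ proj (W₁ + W₂) χ ≤ ∑ j, w j * (a j + b j) ^ 2 := by
    refine Finset.sum_le_sum fun j _ => ?_
    refine mul_le_mul_of_nonneg_left ?_ (hw0 j)
    refine pow_le_pow_left₀ (norm_nonneg _) ?_ 2
    rw [ContinuousLinearMap.add_comp]
    exact norm_add_le _ _
  set A := M μ proj W₁ χ with hA
  set B := M μ proj W₂ χ with hB
  have hA0 : 0 ≤ A := M_nonneg μ proj W₁ χ
  have hB0 : 0 ≤ B := M_nonneg μ proj W₂ χ
  have hAeq : ∑ j, w j * a j ^ 2 = A := rfl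
  have hBeq : ∑ j, w j * b j ^ 2 = B := rfl
  have cauchy : ∑ j, w j * (a j * b j) ≤ Real.sqrt A * Real.sqrt B := by
    have h1 : ∀ j, w j * (a j * b j) =
        (Real.sqrt (w j) * a j) * (Real.sqrt (w j) * b j) := by
      intro j
      rw [show (Real.sqrt (w j) * a j) * (Real.sqrt (w j) * b j)
        = (Real.sqrt (w j) * Real.sqrt (w j)) * (a j * b j) by ring,
        Real.mul_self_sqrt (hw0 j)]
    have h2 : ∀ j, (Real.sqrt (w j) * a j) ^ 2 = w j * a j ^ 2 := fun j => by
      rw [mul_pow, Real.sq_sqrt (hw0 j)]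
    have h3 : ∀ j, (Real.sqrt (w j) * b j) ^ 2 = w j * b j ^ 2 := fun j => by
      rw [mul_pow, Real.sq_sqrt (hw0 j)]
    calc ∑ j, w j * (a j * b j)
        = ∑ j, (Real.sqrt (w j) * a j) * (Real.sqrt (w j) * b j) := by simp_rw [h1]
      _ ≤ Real.sqrt (∑ j, (Real.sqrt (w j) * a j) ^ 2) *
            Real.sqrt (∑ j, (Real.sqrt (w j) * b j) ^ 2) :=
          Real.sum_mul_le_sqrt_mul_sqrt _ _ _
      _ = Real.sqrt A * Real.sqrt B := by simp only [h2, h3]; rw [hAeq, hBeq]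
  have expand : ∑ j, w j * (a j + b j) ^ 2 =
      (∑ j, w j * a j ^ 2) + 2 * (∑ j, w j * (a j * b j)) + (∑ j, w j * b j ^ 2) := by
    rw [Finset.mul_sum, ← Finset.sum_add_distrib, ← Finset.sum_add_distrib]
    exact Finset.sum_congr rfl fun j _ => by ring
  have bound : M μ proj (W₁ + W₂) χ ≤ (Real.sqrt A + Real.sqrt B) ^ 2 := by
    refine key.trans ?_
    rw [expand, hAeq, hBeq, add_sq, Real.sq_sqrt hA0, Real.sq_sqrt hB0]
    linarith [cauchy]
  calc Real.sqrt (M μ proj (W₁ + W₂) χ) ≤ Real.sqrt ((Real.sqrt A + Real.sqrt B) ^ 2) :=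
        Real.sqrt_le_sqrt bound
    _ = Real.sqrt A + Real.sqrt B :=
        Real.sqrt_sq (add_nonneg (Real.sqrt_nonneg _) (Real.sqrt_nonneg _))

theorem munorm_triangle (μ : Measure 𝒳) [IsProbabilityMeasure μ]
    (proj : Set 𝒳 → (Lp ℂ 2 μ →L[ℂ] Lp ℂ 2 μ))
    (hproj : IsIndicatorProj μ proj)
    (W₁ W₂ : Lp ℂ 2 μ →L[ℂ] Lp ℂ 2 μ) :
    munorm μ proj (W₁ + W₂) ≤ munorm μ proj W₁ + munorm μ proj W₂ := by
  refine le_ciInf_add_ciInf fun χ₁ χ₂ => ?_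
  have hbdd : BddBelow (Set.range fun χ : Partition μ =>
      Real.sqrt (M μ proj (W₁ + W₂) χ)) := by
    refine ⟨0, ?_⟩
    rintro x ⟨χ, rfl⟩
    exact Real.sqrt_nonneg _
  have h1 : munorm μ proj (W₁ + W₂) ≤ Real.sqrt (M μ proj (W₁ + W₂) (χ₁.refine χ₂)) :=
    ciInf_le hbdd (χ₁.refine χ₂)
  refine h1.trans ((sqrt_M_add_le proj W₁ W₂ (χ₁.refine χ₂)).trans ?_)
  exact add_le_add
    (Real.sqrt_le_sqrt (M_refine_le_left hproj W₁ χ₁ χ₂))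
    (Real.sqrt_le_sqrt (M_refine_le_right hproj W₂ χ₁ χ₂))

end MuNorm
end

section
/- For any bounded operator W on L²(𝒳, μ) and any measure-preserving automorphism F of (𝒳, ℬ, μ) with Koopman operator U_F f = f ∘ F, one has ‖W U_F‖_μ = ‖W‖_μ. -/
open MeasureTheory

namespace MuNorm

variable {𝒳 : Type*} [MeasurableSpace 𝒳]

section Aux

variable {μ : Measure 𝒳}

/-- Pull back a partition along a measure-preserving equivalence. -/
def Partition.map (χ : Partition μ) (F : 𝒳 ≃ᵐ 𝒳) (hF : MeasurePreserving F μ μ) :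
    Partition μ where
  J := χ.J
  Y j := F ⁻¹' χ.Y j
  meas j := (χ.meas j).preimage F.measurable
  cover := by
    have h : (Set.univ \ ⋃ j, F ⁻¹' χ.Y j) = F ⁻¹' (Set.univ \ ⋃ j, χ.Y j) := by
      simp [Set.preimage_diff, Set.preimage_iUnion]
    rw [h, hF.measure_preimage_equiv, χ.cover]
  disj j k hjk := by
    have h : F ⁻¹' χ.Y j ∩ F ⁻¹' χ.Y k = F ⁻¹' (χ.Y j ∩ χ.Y k) := by
      simp [Set.preimage_inter]
    rw [h, hF.measure_preimage_equiv, χ.disj j k hjk]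

/-- An isometry with a right inverse preserves the operator norm on the right. -/
lemma norm_comp_of_isometry (U : Lp ℂ 2 μ →L[ℂ] Lp ℂ 2 μ)
    (hiso : ∀ f, ‖U f‖ = ‖f‖) (hsurj : Function.Surjective U)
    (A : Lp ℂ 2 μ →L[ℂ] Lp ℂ 2 μ) : ‖A.comp U‖ = ‖A‖ := by
  apply le_antisymm
  · apply ContinuousLinearMap.opNorm_le_bound _ (norm_nonneg A)
    intro f
    calc ‖A (U f)‖ ≤ ‖A‖ * ‖U f‖ := A.le_opNorm _
    _ = ‖A‖ * ‖f‖ := by rw [hiso]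
  · apply ContinuousLinearMap.opNorm_le_bound _ (norm_nonneg _)
    intro g
    obtain ⟨f, rfl⟩ := hsurj g
    calc ‖A (U f)‖ ≤ ‖A.comp U‖ * ‖f‖ := (A.comp U).le_opNorm f
    _ = ‖A.comp U‖ * ‖U f‖ := by rw [hiso]

end Aux

theorem munorm_comp_koopman (μ : Measure 𝒳) [IsProbabilityMeasure μ]
    (proj : Set 𝒳 → (Lp ℂ 2 μ →L[ℂ] Lp ℂ 2 μ))
    (hproj : IsIndicatorProj μ proj)
    (F : 𝒳 ≃ᵐ 𝒳) (hF : MeasurePreserving F μ μ)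
    (U : Lp ℂ 2 μ →L[ℂ] Lp ℂ 2 μ)
    (hU : ∀ f : Lp ℂ 2 μ, (U f : 𝒳 → ℂ) =ᵐ[μ] fun x => f (F x))
    (W : Lp ℂ 2 μ →L[ℂ] Lp ℂ 2 μ) :
    munorm μ proj (W.comp U) = munorm μ proj W := by
  -- U is an isometry
  have hiso : ∀ f : Lp ℂ 2 μ, ‖U f‖ = ‖f‖ := by
    intro f
    rw [Lp.norm_def, Lp.norm_def, eLpNorm_congr_ae (hU f)]
    congr 1
    exact eLpNorm_comp_measurePreserving (Lp.aestronglyMeasurable f) hF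
  -- U is surjective
  have hsurj : Function.Surjective U := by
    intro g
    refine ⟨Lp.compMeasurePreserving F.symm hF.symm g, ?_⟩
    apply Lp.ext
    refine (hU _).trans ?_
    have h1 : ((Lp.compMeasurePreserving F.symm hF.symm g : Lp ℂ 2 μ) : 𝒳 → ℂ)
        =ᵐ[μ] (g : 𝒳 → ℂ) ∘ F.symm := Lp.coeFn_compMeasurePreserving g hF.symm
    have h2 := hF.quasiMeasurePreserving.ae_eq h1
    refine h2.trans ?_
    filter_upwards with x
    simp [Function.comp]
  -- U exchanges projections: U ∘ proj Y = proj (F ⁻¹' Y) ∘ U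
  have hexch : ∀ Y : Set 𝒳, MeasurableSet Y →
      (W.comp U).comp (proj Y) = (W.comp (proj (F ⁻¹' Y))).comp U := by
    intro Y hY
    have : U.comp (proj Y) = (proj (F ⁻¹' Y)).comp U := by
      ext f
      simp only [ContinuousLinearMap.comp_apply]
      refine (hU (proj Y f)).trans ?_
      have h1 : ((proj Y f : Lp ℂ 2 μ) : 𝒳 → ℂ) ∘ F =ᵐ[μ] (Y.indicator f) ∘ F :=
        hF.quasiMeasurePreserving.ae_eq (hproj Y hY f)
      refine h1.trans ?_
      refine Filter.EventuallyEq.symm ?_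
      filter_upwards [hproj (F ⁻¹' Y) (hY.preimage F.measurable) (U f), hU f] with x hx2 hx
      rw [hx2]
      by_cases h : x ∈ F ⁻¹' Y
      · simp only [Function.comp_apply, Set.indicator_of_mem h,
          Set.indicator_of_mem (show F x ∈ Y from h)]
        exact hx
      · simp only [Function.comp_apply, Set.indicator_of_notMem h,
          Set.indicator_of_notMem (show F x ∉ Y from h)]
    calc (W.comp U).comp (proj Y) = W.comp (U.comp (proj Y)) := by
          rw [ContinuousLinearMap.comp_assoc]
    _ = W.comp ((proj (F ⁻¹' Y)).comp U) := by rw [this]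
    _ = (W.comp (proj (F ⁻¹' Y))).comp U := by rw [ContinuousLinearMap.comp_assoc]
  -- the key identity on M
  have key : ∀ χ : Partition μ,
      M μ proj (W.comp U) χ = M μ proj W (χ.map F hF) := by
    intro χ
    unfold M
    refine Finset.sum_congr rfl fun j _ => ?_
    simp only [Partition.map]
    rw [hF.measure_preimage_equiv, hexch (χ.Y j) (χ.meas j),
      norm_comp_of_isometry U hiso hsurj]
  have hbddW : BddBelow (Set.range fun χ : Partition μ => Real.sqrt (M μ proj W χ)) :=
    ⟨0, by rintro x ⟨χ, rfl⟩; exact Real.sqrt_nonneg _⟩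
  have hbddWU : BddBelow
      (Set.range fun χ : Partition μ => Real.sqrt (M μ proj (W.comp U) χ)) :=
    ⟨0, by rintro x ⟨χ, rfl⟩; exact Real.sqrt_nonneg _⟩
  have hne : Nonempty (Partition μ) :=
    ⟨⟨1, fun _ => Set.univ, fun _ => MeasurableSet.univ, by
      rw [Set.iUnion_const]; simp, fun j k h => by
      fin_cases j <;> fin_cases k <;> simp_all⟩⟩
  apply le_antisymm
  · refine le_ciInf fun χ => ?_
    have := key (χ.map F.symm hF.symm)
    have hYY : ∀ j, F ⁻¹' (F.symm ⁻¹' (χ.Y j)) = χ.Y j := by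
      intro j; ext x; simp
    have heq : M μ proj W ((χ.map F.symm hF.symm).map F hF) = M μ proj W χ := by
      unfold M
      refine Finset.sum_congr rfl fun j _ => ?_
      simp only [Partition.map]
      rw [hYY j]
    calc munorm μ proj (W.comp U) ≤ Real.sqrt (M μ proj (W.comp U) (χ.map F.symm hF.symm)) :=
          ciInf_le hbddWU _
    _ = Real.sqrt (M μ proj W χ) := by rw [this, heq]
  · refine le_ciInf fun χ => ?_
    calc munorm μ proj W ≤ Real.sqrt (M μ proj W (χ.map F hF)) := ciInf_le hbddW _
    _ = Real.sqrt (M μ proj (W.comp U) χ) := by rw [key]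

end MuNorm
end

section
/- If the probability measure μ has no atoms, then every finite-rank bounded operator W on L²(𝒳, μ) has ‖W‖_μ = 0. -/
open MeasureTheory

namespace MuNorm

variable {𝒳 : Type*} [MeasurableSpace 𝒳]

open scoped ENNReal ComplexConjugate

section Aux

variable (μ : Measure 𝒳) [IsProbabilityMeasure μ]





lemma half_lemma
    (hNoAtoms : ∀ X : Set 𝒳, MeasurableSet X → 0 < μ X →
      ∃ Y : Set 𝒳, MeasurableSet Y ∧ Y ⊆ X ∧ 0 < μ Y ∧ μ Y < μ X)
    (X : Set 𝒳) (hX : MeasurableSet X) (hpos : 0 < μ X) :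
    ∃ Y : Set 𝒳, MeasurableSet Y ∧ Y ⊆ X ∧ 0 < μ Y ∧ μ Y ≤ μ X * 2⁻¹ := by
  obtain ⟨Y, hYm, hYs, hY0, hYlt⟩ := hNoAtoms X hX hpos
  have hfin : μ Y ≠ ⊤ := (measure_lt_top μ Y).ne
  rcases le_or_gt (μ Y) (μ X * 2⁻¹) with h | h
  · exact ⟨Y, hYm, hYs, hY0, h⟩
  · refine ⟨X \ Y, hX.diff hYm, Set.diff_subset, ?_, ?_⟩
    · have hd : μ (X \ Y) = μ X - μ Y := measure_diff hYs hYm.nullMeasurableSet hfin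
      rw [hd]
      exact tsub_pos_of_lt hYlt
    · have hd : μ (X \ Y) = μ X - μ Y := measure_diff hYs hYm.nullMeasurableSet hfin
      rw [hd]
      have : μ X ≤ μ X * 2⁻¹ + μ Y := by
        calc μ X = μ X * 2⁻¹ + μ X * 2⁻¹ := by
              rw [← div_eq_mul_inv, ENNReal.add_halves]
          _ ≤ μ X * 2⁻¹ + μ Y := by gcongr
      exact tsub_le_iff_right.mpr this

lemma small_lemma
    (hNoAtoms : ∀ X : Set 𝒳, MeasurableSet X → 0 < μ X →
      ∃ Y : Set 𝒳, MeasurableSet Y ∧ Y ⊆ X ∧ 0 < μ Y ∧ μ Y < μ X)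
    (X : Set 𝒳) (hX : MeasurableSet X) (hpos : 0 < μ X) (ε : ℝ≥0∞) (hε : 0 < ε) :
    ∃ Y : Set 𝒳, MeasurableSet Y ∧ Y ⊆ X ∧ 0 < μ Y ∧ μ Y < ε := by
  have key : ∀ n : ℕ, ∃ Y : Set 𝒳, MeasurableSet Y ∧ Y ⊆ X ∧ 0 < μ Y ∧ μ Y ≤ μ X * 2⁻¹ ^ n := by
    intro n
    induction n with
    | zero => exact ⟨X, hX, subset_rfl, hpos, by simp⟩
    | succ n ih =>
      obtain ⟨Y, hYm, hYs, hY0, hYle⟩ := ih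
      obtain ⟨Z, hZm, hZs, hZ0, hZle⟩ := half_lemma μ hNoAtoms Y hYm hY0
      refine ⟨Z, hZm, hZs.trans hYs, hZ0, ?_⟩
      calc μ Z ≤ μ Y * 2⁻¹ := hZle
        _ ≤ (μ X * 2⁻¹ ^ n) * 2⁻¹ := by gcongr
        _ = μ X * 2⁻¹ ^ (n + 1) := by rw [mul_assoc, pow_succ]
  obtain ⟨n, hn⟩ := ENNReal.exists_inv_two_pow_lt hε.ne'
  obtain ⟨Y, hYm, hYs, hY0, hYle⟩ := key n
  refine ⟨Y, hYm, hYs, hY0, lt_of_le_of_lt (hYle.trans ?_) hn⟩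
  calc μ X * 2⁻¹ ^ n ≤ 1 * 2⁻¹ ^ n := by gcongr; exact prob_le_one
    _ = 2⁻¹ ^ n := one_mul _

lemma pick_lemma (ε : ℝ≥0∞) (R : Set 𝒳) :
    ∃ Y : Set 𝒳, MeasurableSet Y ∧ Y ⊆ R ∧ μ Y ≤ ε ∧
      ∀ Z : Set 𝒳, MeasurableSet Z → Z ⊆ R → μ Z ≤ ε → μ Z ≤ 2 * μ Y := by
  set S : Set ℝ≥0∞ := {m | ∃ Z : Set 𝒳, MeasurableSet Z ∧ Z ⊆ R ∧ μ Z ≤ ε ∧ μ Z = m} with hS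
  have hmem : ∀ Z : Set 𝒳, MeasurableSet Z → Z ⊆ R → μ Z ≤ ε → μ Z ∈ S :=
    fun Z h1 h2 h3 => ⟨Z, h1, h2, h3, rfl⟩
  set s := sSup S with hs
  rcases eq_or_ne s 0 with h0 | h0
  · refine ⟨∅, MeasurableSet.empty, Set.empty_subset _, by simp, ?_⟩
    intro Z h1 h2 h3
    have := le_sSup (hmem Z h1 h2 h3)
    rw [← hs, h0] at this
    simpa using this
  · have hs1 : s ≤ 1 := by
      apply sSup_le
      rintro m ⟨Z, _, _, _, rfl⟩
      exact prob_le_one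
    have hhalf : s / 2 < s := ENNReal.half_lt_self h0 (lt_of_le_of_lt hs1 ENNReal.one_lt_top).ne
    obtain ⟨m, hmS, hm⟩ := (lt_sSup_iff).mp hhalf
    obtain ⟨Y, hYm, hYs, hYε, hYeq⟩ := hmS
    refine ⟨Y, hYm, hYs, hYε, ?_⟩
    intro Z h1 h2 h3
    have hZs : μ Z ≤ s := le_sSup (hmem Z h1 h2 h3)
    have : s ≤ 2 * μ Y := by
      rw [hYeq]
      have := (ENNReal.div_lt_iff (Or.inl (two_ne_zero)) (Or.inl (ENNReal.ofNat_ne_top))).mp hm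
      rw [mul_comm] at this
      exact this.le
    exact hZs.trans this

lemma exists_fine_partition
    (hNoAtoms : ∀ X : Set 𝒳, MeasurableSet X → 0 < μ X →
      ∃ Y : Set 𝒳, MeasurableSet Y ∧ Y ⊆ X ∧ 0 < μ Y ∧ μ Y < μ X)
    (ε : ℝ≥0∞) (hε : 0 < ε) :
    ∃ χ : Partition μ, ∀ j, μ (χ.Y j) ≤ ε := by
  choose pick pickm picks pickε pickmax using pick_lemma μ ε
  set R : ℕ → Set 𝒳 := fun n => Nat.rec Set.univ (fun _ S => S \ pick S) n with hR
  have hRsucc : ∀ n, R (n + 1) = R n \ pick (R n) := fun n => rfl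
  have hRmeas : ∀ n, MeasurableSet (R n) := by
    intro n
    induction n with
    | zero => exact MeasurableSet.univ
    | succ n ih => exact ih.diff (pickm _)
  have hRdec : ∀ n, R (n + 1) ⊆ R n := fun n => Set.diff_subset
  have hRanti : ∀ m n, m ≤ n → R n ⊆ R m := by
    intro m n h
    induction h with
    | refl => exact subset_rfl
    | step h ih => exact (hRdec _).trans ih
  have hdisj : ∀ m n, m < n → Disjoint (pick (R m)) (pick (R n)) := by
    intro m n h
    have h1 : pick (R n) ⊆ R n := picks _
    have h2 : R n ⊆ R (m + 1) := hRanti _ _ h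
    have h3 : Disjoint (pick (R m)) (R (m + 1)) := by
      rw [hRsucc]
      exact Set.disjoint_sdiff_right
    exact h3.mono_right (h1.trans h2)
  have hPairwise : Pairwise (Function.onFun Disjoint (fun n => pick (R n))) := by
    intro m n hmn
    rcases lt_or_gt_of_ne hmn with h | h
    · exact hdisj m n h
    · exact (hdisj n m h).symm
  have htsum : ∑' n, μ (pick (R n)) ≠ ⊤ := by
    rw [← measure_iUnion hPairwise (fun n => pickm _)]
    exact (measure_lt_top μ _).ne
  -- the intersection is null
  have hRinf : μ (⋂ n, R n) = 0 := by
    by_contra h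
    have hpos : 0 < μ (⋂ n, R n) := pos_iff_ne_zero.mpr h
    obtain ⟨Z, hZm, hZs, hZ0, hZε⟩ := small_lemma μ hNoAtoms _ (MeasurableSet.iInter hRmeas) hpos ε hε
    have hbound : ∀ n, μ Z ≤ 2 * μ (pick (R n)) := by
      intro n
      exact pickmax _ Z hZm (hZs.trans (Set.iInter_subset _ n)) hZε.le
    have htend : Filter.Tendsto (fun n => 2 * μ (pick (R n))) Filter.atTop (nhds 0) := by
      have h1 : Filter.Tendsto (fun n => μ (pick (R n))) Filter.atTop (nhds 0) :=
        ENNReal.tendsto_atTop_zero_of_tsum_ne_top htsum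
      have := ENNReal.Tendsto.const_mul (a := 2) h1 (Or.inr ENNReal.ofNat_ne_top)
      simpa using this
    have : μ Z ≤ 0 := ge_of_tendsto' htend hbound
    exact hZ0.ne' (le_antisymm this zero_le)
  -- choose N with small tail
  have htail : ∃ N, ∑' k, μ (pick (R (k + N))) ≤ ε := by
    have := ENNReal.tendsto_sum_nat_add (fun n => μ (pick (R n))) htsum
    have h2 : ∀ᶠ N in Filter.atTop, (∑' k, μ (pick (R (k + N)))) < ε :=
      this.eventually_lt_const hε
    obtain ⟨N, hN⟩ := h2.exists
    exact ⟨N, hN.le⟩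
  obtain ⟨N, hN⟩ := htail
  -- last piece is small
  have hRN : μ (R N) ≤ ε := by
    have hsub : R N ⊆ (⋂ n, R n) ∪ ⋃ k, pick (R (k + N)) := by
      intro x hx
      by_cases hxall : ∃ k, x ∈ pick (R (k + N))
      · exact Or.inr (Set.mem_iUnion.mpr hxall)
      · push_neg at hxall
        left
        apply Set.mem_iInter.mpr
        intro n
        rcases le_or_gt n N with h | h
        · exact hRanti n N h hx
        · have key : ∀ k, x ∈ R (N + k) := by
            intro k
            induction k with
            | zero => exact hx
            | succ k ih =>
              rw [show N + (k+1) = (N + k) + 1 from rfl, hRsucc]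
              refine ⟨ih, ?_⟩
              have := hxall k
              rw [Nat.add_comm k N] at this
              exact this
          have := key (n - N)
          rwa [Nat.add_sub_cancel' h.le] at this
    calc μ (R N) ≤ μ ((⋂ n, R n) ∪ ⋃ k, pick (R (k + N))) := measure_mono hsub
      _ ≤ μ (⋂ n, R n) + μ (⋃ k, pick (R (k + N))) := measure_union_le _ _
      _ ≤ 0 + ∑' k, μ (pick (R (k + N))) := by
          gcongr
          · exact hRinf.le
          · exact measure_iUnion_le _
      _ ≤ ε := by simpa using hN
  -- build the partition
  refine ⟨⟨N + 1, fun j => if (j : ℕ) < N then pick (R j) else R N, ?_, ?_, ?_⟩, ?_⟩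
  · intro j
    by_cases h : (j : ℕ) < N
    · simp only [h, if_true]; exact pickm _
    · simp only [h, if_false]; exact hRmeas N
  · have : Set.univ \ ⋃ j : Fin (N+1), (if (j : ℕ) < N then pick (R j) else R N) = ∅ := by
      rw [Set.diff_eq_empty]
      intro x _
      by_cases hx : ∃ j : Fin (N+1), (j:ℕ) < N ∧ x ∈ pick (R j)
      · obtain ⟨j, hj, hxj⟩ := hx
        exact Set.mem_iUnion.mpr ⟨j, by simp [hj, hxj]⟩
      · push_neg at hx
        have hxRN : x ∈ R N := by
          have key : ∀ k, k ≤ N → x ∈ R k := by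
            intro k hk
            induction k with
            | zero => trivial
            | succ k ih =>
              rw [hRsucc]
              refine ⟨ih (Nat.le_of_succ_le hk), ?_⟩
              have hkN : k < N := hk
              have := hx ⟨k, Nat.lt_succ_of_lt hkN⟩ (by simpa using hkN)
              simpa using this
          exact key N le_rfl
        refine Set.mem_iUnion.mpr ⟨⟨N, Nat.lt_succ_self N⟩, ?_⟩
        simp [hxRN]
    rw [this]
    exact measure_empty
  · intro j k hjk
    have main : ∀ (A B : Set 𝒳), Disjoint A B → μ (A ∩ B) = 0 := by
      intro A B hAB
      rw [Set.disjoint_iff_inter_eq_empty.mp hAB]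
      exact measure_empty
    by_cases hj : (j : ℕ) < N <;> by_cases hk : (k : ℕ) < N <;>
      simp only [hj, hk, if_true, if_false]
    · apply main
      have hne : (j : ℕ) ≠ (k : ℕ) := fun h => hjk (Fin.ext h)
      rcases lt_or_gt_of_ne hne with h | h
      · exact hdisj _ _ h
      · exact (hdisj _ _ h).symm
    · apply main
      have hRNsub : R N ⊆ R ((j:ℕ) + 1) := hRanti _ _ hj
      have : Disjoint (pick (R j)) (R ((j:ℕ) + 1)) := by
        rw [hRsucc]; exact Set.disjoint_sdiff_right
      exact this.mono_right hRNsub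
    · apply main
      have hRNsub : R N ⊆ R ((k:ℕ) + 1) := hRanti _ _ hk
      have : Disjoint (pick (R k)) (R ((k:ℕ) + 1)) := by
        rw [hRsucc]; exact Set.disjoint_sdiff_right
      exact (this.mono_right hRNsub).symm
    · exfalso
      apply hjk
      have hj' : (j : ℕ) = N := Nat.eq_of_lt_succ_of_not_lt j.isLt hj
      have hk' : (k : ℕ) = N := Nat.eq_of_lt_succ_of_not_lt k.isLt hk
      exact Fin.ext (hj'.trans hk'.symm)
  · intro j
    by_cases h : (j : ℕ) < N
    · simp only [h, if_true]; exact pickε _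
    · simp only [h, if_false]; exact hRN



local notation "⟪" x ", " y "⟫" => @inner ℂ _ _ x y

set_option linter.unusedSectionVars false

lemma norm_sq_eq_integral (f : Lp ℂ 2 μ) : ‖f‖ ^ 2 = ∫ x, ‖f x‖ ^ 2 ∂μ := by
  have h1 : ‖f‖ ^ 2 = RCLike.re ⟪f, f⟫ := (InnerProductSpace.norm_sq_eq_re_inner (𝕜 := ℂ) f)
  rw [h1, L2.inner_def, ← integral_re (L2.integrable_inner f f)]
  congr 1; ext x
  rw [← InnerProductSpace.norm_sq_eq_re_inner (𝕜 := ℂ) (f x)]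

lemma integrable_norm_sq (f : Lp ℂ 2 μ) : Integrable (fun x => ‖f x‖ ^ 2) μ := by
  have h := (L2.integrable_inner (𝕜 := ℂ) f f).re
  refine h.congr (Filter.Eventually.of_forall fun x => ?_)
  exact (InnerProductSpace.norm_sq_eq_re_inner (𝕜 := ℂ) (f x)).symm

variable {μ}

lemma sum_indicator_le {J : ℕ} (Y : Fin J → Set 𝒳) (x : 𝒳)
    (hx : ∀ j k, j ≠ k → x ∉ Y j ∩ Y k) (c : ℝ) (hc : 0 ≤ c) :
    ∑ j, (Y j).indicator (fun _ => c) x ≤ c := by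
  by_cases h : ∃ j0, x ∈ Y j0
  · obtain ⟨j0, hj0⟩ := h
    have : ∑ j, (Y j).indicator (fun _ => c) x = (Y j0).indicator (fun _ => c) x := by
      apply Finset.sum_eq_single
      · intro j _ hj
        have : x ∉ Y j := fun hxj => hx j j0 hj ⟨hxj, hj0⟩
        simp [Set.indicator_of_notMem this]
      · intro h; exact absurd (Finset.mem_univ j0) h
    rw [this, Set.indicator_of_mem hj0]
  · push_neg at h
    have : ∀ j ∈ Finset.univ, (Y j).indicator (fun _ => c) x = 0 := fun j _ =>
      Set.indicator_of_notMem (h j) _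
    rw [Finset.sum_congr rfl this]
    simpa using hc

lemma sum_proj_norm_sq_le
    (proj : Set 𝒳 → (Lp ℂ 2 μ →L[ℂ] Lp ℂ 2 μ)) (hproj : IsIndicatorProj μ proj)
    {J : ℕ} (Y : Fin J → Set 𝒳) (meas : ∀ j, MeasurableSet (Y j))
    (disj : ∀ j k, j ≠ k → μ (Y j ∩ Y k) = 0) (f : Lp ℂ 2 μ) :
    ∑ j, ‖proj (Y j) f‖ ^ 2 ≤ ‖f‖ ^ 2 := by
  have hae : ∀ᵐ x ∂μ, ∀ j k, j ≠ k → x ∉ Y j ∩ Y k := by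
    rw [ae_all_iff]
    intro j
    rw [ae_all_iff]
    intro k
    rw [ae_all_iff]
    intro hjk
    exact (measure_eq_zero_iff_ae_notMem.mp (disj j k hjk))
  -- each term as an integral
  have hterm : ∀ j, ‖proj (Y j) f‖ ^ 2 = ∫ x, (Y j).indicator (fun x => ‖f x‖ ^ 2) x ∂μ := by
    intro j
    rw [norm_sq_eq_integral]
    apply integral_congr_ae
    filter_upwards [hproj (Y j) (meas j) f] with x hx
    rw [hx]
    by_cases hxY : x ∈ Y j
    · simp [Set.indicator_of_mem hxY]
    · simp [Set.indicator_of_notMem hxY]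
  have hint : ∀ j, Integrable ((Y j).indicator (fun x => ‖f x‖ ^ 2)) μ :=
    fun j => (integrable_norm_sq μ f).indicator (meas j)
  calc ∑ j, ‖proj (Y j) f‖ ^ 2 = ∑ j, ∫ x, (Y j).indicator (fun x => ‖f x‖ ^ 2) x ∂μ := by
        simp_rw [hterm]
    _ = ∫ x, ∑ j, (Y j).indicator (fun x => ‖f x‖ ^ 2) x ∂μ :=
        (integral_finset_sum _ (fun j _ => hint j)).symm
    _ ≤ ∫ x, ‖f x‖ ^ 2 ∂μ := by
        apply integral_mono_ae (integrable_finset_sum _ (fun j _ => hint j))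
          (integrable_norm_sq μ f)
        filter_upwards [hae] with x hx
        have := sum_indicator_le Y x hx (‖f x‖ ^ 2) (by positivity)
        exact this
    _ = ‖f‖ ^ 2 := (norm_sq_eq_integral μ f).symm

lemma proj_selfadj
    (proj : Set 𝒳 → (Lp ℂ 2 μ →L[ℂ] Lp ℂ 2 μ)) (hproj : IsIndicatorProj μ proj)
    (Y : Set 𝒳) (hY : MeasurableSet Y) (φ f : Lp ℂ 2 μ) :
    ⟪φ, proj Y f⟫ = ⟪proj Y φ, f⟫ := by
  rw [L2.inner_def, L2.inner_def]
  apply integral_congr_ae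
  filter_upwards [hproj Y hY f, hproj Y hY φ] with x h1 h2
  rw [h1, h2]
  by_cases hxY : x ∈ Y
  · simp [Set.indicator_of_mem hxY]
  · simp [Set.indicator_of_notMem hxY]

lemma exists_M_bound
    (proj : Set 𝒳 → (Lp ℂ 2 μ →L[ℂ] Lp ℂ 2 μ)) (hproj : IsIndicatorProj μ proj)
    (W : Lp ℂ 2 μ →L[ℂ] Lp ℂ 2 μ)
    (hW : FiniteDimensional ℂ (LinearMap.range (W : Lp ℂ 2 μ →ₗ[ℂ] Lp ℂ 2 μ))) :
    ∃ C : ℝ, 0 ≤ C ∧ ∀ χ : Partition μ, ∀ δ : ℝ, 0 ≤ δ →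
      (∀ j, (μ (χ.Y j)).toReal ≤ δ) → M μ proj W χ ≤ C * δ := by
  haveI := hW
  set V := LinearMap.range (W : Lp ℂ 2 μ →ₗ[ℂ] Lp ℂ 2 μ) with hV
  set r := Module.finrank ℂ V with hr
  set b : Module.Basis (Fin r) ℂ V := Module.finBasis ℂ V with hb
  have hmem : ∀ f, W f ∈ V := fun f => LinearMap.mem_range_self _ f
  set W' : Lp ℂ 2 μ →L[ℂ] V := W.codRestrict V hmem with hW'
  set ℓ : Fin r → (Lp ℂ 2 μ →L[ℂ] ℂ) :=
    fun i => (LinearMap.toContinuousLinearMap (b.coord i)).comp W' with hℓ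
  set φ : Fin r → Lp ℂ 2 μ :=
    fun i => (InnerProductSpace.toDual ℂ (Lp ℂ 2 μ)).symm (ℓ i) with hφ
  set g : Fin r → Lp ℂ 2 μ := fun i => (b i : Lp ℂ 2 μ) with hg
  have hrep : ∀ f, W f = ∑ i, ⟪φ i, f⟫ • g i := by
    intro f
    have h1 : ∀ i, ⟪φ i, f⟫ = ℓ i f := fun i => InnerProductSpace.toDual_symm_apply
    have h2 : ∀ i, ℓ i f = b.repr (W' f) i := fun i => rfl
    have h3 : (W' f : Lp ℂ 2 μ) = W f := rfl
    calc W f = ((W' f : V) : Lp ℂ 2 μ) := h3.symm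
      _ = ((∑ i, b.repr (W' f) i • b i : V) : Lp ℂ 2 μ) := by rw [Module.Basis.sum_repr]
      _ = ∑ i, b.repr (W' f) i • (b i : Lp ℂ 2 μ) := by
          push_cast
          rfl
      _ = ∑ i, ⟪φ i, f⟫ • g i := by
          apply Finset.sum_congr rfl
          intro i _
          rw [h1, h2]
  -- operator norm bound
  have hopnorm : ∀ Y : Set 𝒳, MeasurableSet Y →
      ‖W.comp (proj Y)‖ ≤ ∑ i, ‖g i‖ * ‖proj Y (φ i)‖ := by
    intro Y hY
    apply ContinuousLinearMap.opNorm_le_bound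
    · apply Finset.sum_nonneg
      intro i _
      positivity
    · intro f
      have : W (proj Y f) = ∑ i, ⟪proj Y (φ i), f⟫ • g i := by
        rw [hrep]
        apply Finset.sum_congr rfl
        intro i _
        rw [proj_selfadj proj hproj Y hY]
      rw [ContinuousLinearMap.comp_apply, this]
      calc ‖∑ i, ⟪proj Y (φ i), f⟫ • g i‖ ≤ ∑ i, ‖⟪proj Y (φ i), f⟫ • g i‖ :=
            norm_sum_le _ _
        _ ≤ ∑ i, (‖g i‖ * ‖proj Y (φ i)‖) * ‖f‖ := by
            apply Finset.sum_le_sum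
            intro i _
            rw [norm_smul]
            calc ‖⟪proj Y (φ i), f⟫‖ * ‖g i‖ ≤ (‖proj Y (φ i)‖ * ‖f‖) * ‖g i‖ := by
                  gcongr
                  exact norm_inner_le_norm _ _
              _ = (‖g i‖ * ‖proj Y (φ i)‖) * ‖f‖ := by ring
        _ = (∑ i, ‖g i‖ * ‖proj Y (φ i)‖) * ‖f‖ := by rw [Finset.sum_mul]
  refine ⟨(∑ i, ‖g i‖ ^ 2) * (∑ i, ‖φ i‖ ^ 2), by positivity, ?_⟩
  intro χ δ hδ0 hδ
  have hkey : ∀ i, ∑ j, ‖proj (χ.Y j) (φ i)‖ ^ 2 ≤ ‖φ i‖ ^ 2 := fun i =>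
    sum_proj_norm_sq_le proj hproj χ.Y χ.meas χ.disj (φ i)
  unfold M
  calc ∑ j, (μ (χ.Y j)).toReal * ‖W.comp (proj (χ.Y j))‖ ^ 2
      ≤ ∑ j, δ * ((∑ i, ‖g i‖ ^ 2) * (∑ i, ‖proj (χ.Y j) (φ i)‖ ^ 2)) := by
        apply Finset.sum_le_sum
        intro j _
        have h1 : ‖W.comp (proj (χ.Y j))‖ ^ 2 ≤ (∑ i, ‖g i‖ * ‖proj (χ.Y j) (φ i)‖) ^ 2 :=
          pow_le_pow_left₀ (norm_nonneg _) (hopnorm _ (χ.meas j)) 2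
        have h2 : (∑ i, ‖g i‖ * ‖proj (χ.Y j) (φ i)‖) ^ 2 ≤
            (∑ i, ‖g i‖ ^ 2) * (∑ i, ‖proj (χ.Y j) (φ i)‖ ^ 2) :=
          Finset.sum_mul_sq_le_sq_mul_sq _ _ _
        exact mul_le_mul (hδ j) (h1.trans h2) (by positivity) hδ0
    _ = (δ * ∑ i, ‖g i‖ ^ 2) * ∑ i, ∑ j, ‖proj (χ.Y j) (φ i)‖ ^ 2 := by
        rw [← Finset.mul_sum, Finset.sum_comm, ← Finset.mul_sum, mul_assoc]
    _ ≤ (δ * ∑ i, ‖g i‖ ^ 2) * ∑ i, ‖φ i‖ ^ 2 := by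
        apply mul_le_mul_of_nonneg_left (Finset.sum_le_sum fun i _ => hkey i) (by positivity)
    _ = (∑ i, ‖g i‖ ^ 2) * (∑ i, ‖φ i‖ ^ 2) * δ := by ring


end Aux

theorem munorm_finiteRank_eq_zero (μ : Measure 𝒳) [IsProbabilityMeasure μ]
    (proj : Set 𝒳 → (Lp ℂ 2 μ →L[ℂ] Lp ℂ 2 μ))
    (hproj : IsIndicatorProj μ proj)
    (hNoAtoms : ∀ X : Set 𝒳, MeasurableSet X → 0 < μ X →
      ∃ Y : Set 𝒳, MeasurableSet Y ∧ Y ⊆ X ∧ 0 < μ Y ∧ μ Y < μ X)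
    (W : Lp ℂ 2 μ →L[ℂ] Lp ℂ 2 μ)
    (hW : FiniteDimensional ℂ (LinearMap.range (W : Lp ℂ 2 μ →ₗ[ℂ] Lp ℂ 2 μ))) :
    munorm μ proj W = 0 := by
  obtain ⟨C, hC0, hC⟩ := exists_M_bound proj hproj W hW
  have hbdd : BddBelow (Set.range fun χ : Partition μ => Real.sqrt (M μ proj W χ)) := by
    refine ⟨0, ?_⟩
    rintro x ⟨χ, rfl⟩
    exact Real.sqrt_nonneg _
  obtain ⟨χ₀, _⟩ := exists_fine_partition μ hNoAtoms 1 one_pos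
  haveI : Nonempty (Partition μ) := ⟨χ₀⟩
  have h1 : 0 ≤ munorm μ proj W := le_ciInf fun χ => Real.sqrt_nonneg _
  have h2 : ∀ ε : ℝ, 0 < ε → munorm μ proj W ≤ 0 + ε := by
    intro ε hε
    set δ : ℝ := ε ^ 2 / (C + 1) with hδdef
    have hC1 : (0 : ℝ) < C + 1 := by linarith
    have hδ0 : 0 < δ := by positivity
    obtain ⟨χ, hχ⟩ := exists_fine_partition μ hNoAtoms (ENNReal.ofReal δ)
      (ENNReal.ofReal_pos.mpr hδ0)
    have hMle : M μ proj W χ ≤ C * δ := by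
      apply hC χ δ hδ0.le
      intro j
      exact ENNReal.toReal_le_of_le_ofReal hδ0.le (hχ j)
    have hCδ : C * δ ≤ ε ^ 2 := by
      calc C * δ = (C / (C + 1)) * ε ^ 2 := by rw [hδdef]; ring
        _ ≤ 1 * ε ^ 2 := by
            apply mul_le_mul_of_nonneg_right _ (by positivity)
            exact div_le_one_of_le₀ (by linarith) hC1.le
        _ = ε ^ 2 := one_mul _
    have hsqrt : Real.sqrt (M μ proj W χ) ≤ ε := by
      calc Real.sqrt (M μ proj W χ) ≤ Real.sqrt (ε ^ 2) :=
            Real.sqrt_le_sqrt (hMle.trans hCδ)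
        _ = ε := Real.sqrt_sq hε.le
    calc munorm μ proj W ≤ Real.sqrt (M μ proj W χ) := ciInf_le hbdd χ
      _ ≤ 0 + ε := by linarith
  exact le_antisymm (le_of_forall_pos_le_add h2) h1

end MuNorm
end

section
/- Let 𝒳 = {1,…,J} with the uniform probability measure μ({j}) = 1/J, so that ℋ ≅ ℂ^J with inner product ⟨f,g⟩ = (1/J)Σ f_j ḡ_j. For any linear operator W = (W_{jk}) on ℋ, ‖W‖_μ² = (1/J) Σ_{j,k=1}^J |W_{jk}|². -/
open MeasureTheory
open scoped ENNReal

namespace MuNorm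

variable {𝒳 : Type*} [MeasurableSpace 𝒳]

section Aux

variable {J : ℕ}

local notation "ν" => (((J : ℝ≥0∞))⁻¹ • Measure.count : Measure (Fin J))

lemma nu_singleton (j : Fin J) : ν {j} = ((J : ℝ≥0∞))⁻¹ := by
  simp [Measure.smul_apply, Measure.count_singleton]

lemma nu_fin (hJ : 0 < J) : IsFiniteMeasure ν := by
  constructor
  rw [Measure.smul_apply, Measure.count_univ]
  simp only [smul_eq_mul]
  exact ENNReal.mul_lt_top (by simp [hJ]) (by simp)

lemma aeq (hJ : 0 < J) {f g : Fin J → ℂ} (h : f =ᵐ[ν] g) : f = g := by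
  funext j
  by_contra hne
  have h0 : ν {x | ¬ f x = g x} = 0 := MeasureTheory.ae_iff.mp h
  have : ν {j} = 0 :=
    measure_mono_null (by simpa using hne : ({j} : Set (Fin J)) ⊆ {x | ¬ f x = g x}) h0
  rw [nu_singleton] at this
  exact (by simp [hJ.ne'] : ((J : ℝ≥0∞))⁻¹ ≠ 0) this

lemma memlp (hJ : 0 < J) (g : Fin J → ℂ) : MemLp g 2 ν := by
  haveI := nu_fin (J := J) hJ
  obtain ⟨C, hC⟩ := Finite.exists_le (fun i => ‖g i‖)
  exact MemLp.of_bound (measurable_of_finite g).aestronglyMeasurable C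
    (Filter.Eventually.of_forall hC)

lemma norm_sq_eq (hJ : 0 < J) (f : Lp ℂ 2 ν) :
    ‖f‖ ^ 2 = (1 / (J : ℝ)) * ∑ i, ‖(f : Fin J → ℂ) i‖ ^ 2 := by
  haveI := nu_fin (J := J) hJ
  have h1 : (‖f‖ : ℝ) ^ 2 = RCLike.re (inner (𝕜 := ℂ) f f) := by
    rw [← @inner_self_eq_norm_sq ℂ]
  rw [h1, MeasureTheory.L2.inner_def]
  rw [integral_fintype (Integrable.of_finite)]
  rw [map_sum, Finset.mul_sum]
  refine Finset.sum_congr rfl fun i _ => ?_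
  rw [RCLike.smul_re, ← @inner_self_eq_norm_sq ℂ]
  congr 1
  rw [measureReal_def, nu_singleton]
  rw [ENNReal.toReal_inv]
  simp

lemma nu_toReal (S : Set (Fin J)) :
    (ν S).toReal = ((Set.toFinite S).toFinset.card : ℝ) / J := by
  rw [Measure.smul_apply, Measure.count_apply_finite S (Set.toFinite S)]
  simp only [smul_eq_mul, ENNReal.toReal_mul, ENNReal.toReal_inv, ENNReal.toReal_natCast]
  ring

end Aux

theorem munorm_finite (J : ℕ) (hJ : 0 < J)
    (μ : Measure (Fin J)) (hμ : μ = ((J : ℝ≥0∞))⁻¹ • Measure.count)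
    (proj : Set (Fin J) → (Lp ℂ 2 μ →L[ℂ] Lp ℂ 2 μ))
    (hproj : IsIndicatorProj μ proj)
    (W : Lp ℂ 2 μ →L[ℂ] Lp ℂ 2 μ)
    (A : Matrix (Fin J) (Fin J) ℂ)
    (hA : ∀ f : Lp ℂ 2 μ, (W f : Fin J → ℂ) =ᵐ[μ] fun j => ∑ k, A j k * f k) :
    munorm μ proj W ^ 2 = (1 / (J : ℝ)) * ∑ j, ∑ k, ‖A j k‖ ^ 2 := by
  classical
  subst hμ
  haveI := nu_fin (J := J) hJ
  set T : ℝ := (1 / (J : ℝ)) * ∑ j, ∑ k, ‖A j k‖ ^ 2 with hT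
  set c : Fin J → ℝ := fun j => ∑ i, ‖A i j‖ ^ 2 with hc
  have hc0 : ∀ j, 0 ≤ c j := fun j => Finset.sum_nonneg fun i _ => sq_nonneg _
  have hT' : T = ∑ j, (1 / (J : ℝ)) * c j := by
    rw [hT, ← Finset.mul_sum]
    congr 1
    rw [Finset.sum_comm]
  have hTnn : 0 ≤ T := by
    rw [hT']
    exact Finset.sum_nonneg fun j _ => mul_nonneg (by positivity) (hc0 j)
  -- pointwise formula for `W ∘ proj Y`
  have hcomp : ∀ (Y : Set (Fin J)), MeasurableSet Y → ∀ f : Lp ℂ 2 _,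
      ((W.comp (proj Y)) f : Fin J → ℂ)
        = fun i => ∑ k, A i k * Y.indicator (f : Fin J → ℂ) k := by
    intro Y hY f
    have h1 := aeq hJ (hA (proj Y f))
    have h2 := aeq hJ (hproj Y hY f)
    rw [ContinuousLinearMap.comp_apply, h1, h2]
  -- basis vectors
  have hdelta : ∀ j : Fin J, ∃ e : Lp ℂ 2 _,
      (e : Fin J → ℂ) = fun i => if i = j then 1 else 0 :=
    fun j => ⟨(memlp hJ _).toLp _, aeq hJ (MemLp.coeFn_toLp _)⟩
  -- lower bound on operator norms
  have key_lower : ∀ (Y : Set (Fin J)), MeasurableSet Y → ∀ j ∈ Y,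
      c j ≤ ‖W.comp (proj Y)‖ ^ 2 := by
    intro Y hY j hj
    obtain ⟨e, he⟩ := hdelta j
    have hind : Y.indicator (e : Fin J → ℂ) = (e : Fin J → ℂ) := by
      funext i
      by_cases hiY : i ∈ Y
      · simp [Set.indicator_of_mem hiY]
      · have hij : ¬ i = j := fun h => hiY (h ▸ hj)
        simp [Set.indicator_of_notMem hiY, he, hij]
    have hval : ((W.comp (proj Y)) e : Fin J → ℂ) = fun i => A i j := by
      rw [hcomp Y hY e, hind, he]
      funext i
      simp [mul_ite, Finset.sum_ite_eq']
    have hnorm2 : ‖(W.comp (proj Y)) e‖ ^ 2 = (1 / (J : ℝ)) * c j := by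
      rw [norm_sq_eq hJ, hval]
    have hen2 : ‖e‖ ^ 2 = (1 / (J : ℝ)) := by
      rw [norm_sq_eq hJ, he]
      rw [Finset.sum_eq_single j (fun b _ hb => by simp [hb]) (by simp)]
      simp
    have hle := ContinuousLinearMap.le_opNorm (W.comp (proj Y)) e
    have hsq : ‖(W.comp (proj Y)) e‖ ^ 2 ≤ ‖W.comp (proj Y)‖ ^ 2 * ‖e‖ ^ 2 := by
      rw [← mul_pow]
      exact pow_le_pow_left₀ (norm_nonneg _) hle 2
    rw [hnorm2, hen2] at hsq
    have hJpos : (0 : ℝ) < 1 / J := by positivity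
    nlinarith [hsq, hJpos]
  -- upper bound for singleton sets
  have key_upper : ∀ j : Fin J, ‖W.comp (proj {j})‖ ≤ Real.sqrt (c j) := by
    intro j
    refine ContinuousLinearMap.opNorm_le_bound _ (Real.sqrt_nonneg _) fun f => ?_
    have hval : ((W.comp (proj {j})) f : Fin J → ℂ)
        = fun i => A i j * (f : Fin J → ℂ) j := by
      rw [hcomp _ (measurableSet_singleton j) f]
      funext i
      have h1 : ∀ k, ({j} : Set (Fin J)).indicator (f : Fin J → ℂ) k
          = if k = j then (f : Fin J → ℂ) j else 0 := by
        intro k; by_cases h : k = j <;> simp [Set.indicator, h]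
      simp only [h1, mul_ite, mul_zero]
      simp [Finset.sum_ite_eq']
    have h1 : ‖(W.comp (proj {j})) f‖ ^ 2
        = (1 / (J : ℝ)) * (c j * ‖(f : Fin J → ℂ) j‖ ^ 2) := by
      rw [norm_sq_eq hJ, hval]
      simp only [norm_mul, mul_pow]
      rw [← Finset.sum_mul, hc]
    have h2 : (1 / (J : ℝ)) * ‖(f : Fin J → ℂ) j‖ ^ 2 ≤ ‖f‖ ^ 2 := by
      rw [norm_sq_eq hJ]
      have h3 := Finset.single_le_sum
        (f := fun i => ‖(f : Fin J → ℂ) i‖ ^ 2) (fun i _ => sq_nonneg _) (Finset.mem_univ j)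
      have hJpos : (0 : ℝ) < 1 / J := by positivity
      nlinarith [h3, hJpos]
    have h3 : ‖(W.comp (proj {j})) f‖ ^ 2 ≤ c j * ‖f‖ ^ 2 := by
      rw [h1]
      calc (1 / (J : ℝ)) * (c j * ‖(f : Fin J → ℂ) j‖ ^ 2)
          = c j * ((1 / (J : ℝ)) * ‖(f : Fin J → ℂ) j‖ ^ 2) := by ring
        _ ≤ c j * ‖f‖ ^ 2 := mul_le_mul_of_nonneg_left h2 (hc0 j)
    calc ‖(W.comp (proj {j})) f‖
        = Real.sqrt (‖(W.comp (proj {j})) f‖ ^ 2) := (Real.sqrt_sq (norm_nonneg _)).symm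
      _ ≤ Real.sqrt (c j * ‖f‖ ^ 2) := Real.sqrt_le_sqrt h3
      _ = Real.sqrt (c j) * ‖f‖ := by
          rw [Real.sqrt_mul (hc0 j), Real.sqrt_sq (norm_nonneg _)]
  -- the singleton partition
  let χ₀ : Partition (((J : ℝ≥0∞))⁻¹ • Measure.count : Measure (Fin J)) :=
    ⟨J, fun j => {j}, fun j => measurableSet_singleton j,
      by simp [Set.iUnion_of_singleton],
      fun j k hjk => by
        have h : ({j} : Set (Fin J)) ∩ {k} = ∅ := by
          ext x
          simp only [Set.mem_inter_iff, Set.mem_singleton_iff, Set.mem_empty_iff_false,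
            iff_false, not_and]
          rintro rfl
          exact hjk
        rw [h, measure_empty]⟩
  have hopj : ∀ j : Fin J, ‖W.comp (proj {j})‖ ^ 2 = c j := by
    intro j
    refine le_antisymm ?_ (key_lower {j} (measurableSet_singleton j) j rfl)
    calc ‖W.comp (proj {j})‖ ^ 2 ≤ Real.sqrt (c j) ^ 2 :=
          pow_le_pow_left₀ (norm_nonneg _) (key_upper j) 2
      _ = c j := Real.sq_sqrt (hc0 j)
  have hM0 : M _ proj W χ₀ = T := by
    show (∑ j : Fin J, ((((J : ℝ≥0∞))⁻¹ • Measure.count : Measure (Fin J)) {j}).toReal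
        * ‖W.comp (proj {j})‖ ^ 2) = T
    rw [hT']
    refine Finset.sum_congr rfl fun j _ => ?_
    rw [hopj j, nu_singleton, ENNReal.toReal_inv, ENNReal.toReal_natCast, one_div]
  -- the general lower bound
  have hMlow : ∀ χ : Partition _, T ≤ M _ proj W χ := by
    intro χ
    have hcover : ∀ j : Fin J, ∃ p : Fin χ.J, j ∈ χ.Y p := by
      intro j
      by_contra hcon
      push_neg at hcon
      have hj : j ∈ Set.univ \ ⋃ p, χ.Y p := ⟨trivial, by simpa using hcon⟩
      have h0 := measure_mono_null (Set.singleton_subset_iff.mpr hj) χ.cover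
      rw [nu_singleton] at h0
      exact (by simp [hJ.ne'] : ((J : ℝ≥0∞))⁻¹ ≠ 0) h0
    have hpiece : ∀ p : Fin χ.J,
        (∑ j : Fin J, if j ∈ χ.Y p then (1 / (J : ℝ)) * c j else 0)
          ≤ ((((J : ℝ≥0∞))⁻¹ • Measure.count : Measure (Fin J)) (χ.Y p)).toReal
            * ‖W.comp (proj (χ.Y p))‖ ^ 2 := by
      intro p
      set F := (Set.toFinite (χ.Y p)).toFinset with hF
      have hmem : ∀ j, j ∈ F ↔ j ∈ χ.Y p := fun j => (Set.toFinite (χ.Y p)).mem_toFinset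
      have hL : (∑ j : Fin J, if j ∈ χ.Y p then (1 / (J : ℝ)) * c j else 0)
          = ∑ j ∈ F, (1 / (J : ℝ)) * c j := by
        rw [show (fun j => if j ∈ χ.Y p then (1 / (J : ℝ)) * c j else 0)
            = fun j => if j ∈ F then (1 / (J : ℝ)) * c j else 0 from by
          funext j; simp [hmem]]
        rw [Finset.sum_ite_mem, Finset.univ_inter]
      have hR : ((((J : ℝ≥0∞))⁻¹ • Measure.count : Measure (Fin J)) (χ.Y p)).toReal
          * ‖W.comp (proj (χ.Y p))‖ ^ 2
          = ∑ _j ∈ F, (1 / (J : ℝ)) * ‖W.comp (proj (χ.Y p))‖ ^ 2 := by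
        rw [nu_toReal, Finset.sum_const, nsmul_eq_mul, ← hF]
        ring
      rw [hL, hR]
      refine Finset.sum_le_sum fun j hj => ?_
      exact mul_le_mul_of_nonneg_left
        (key_lower (χ.Y p) (χ.meas p) j ((hmem j).mp hj)) (by positivity)
    calc T = ∑ j, (1 / (J : ℝ)) * c j := hT'
      _ ≤ ∑ j, ∑ p, (if j ∈ χ.Y p then (1 / (J : ℝ)) * c j else 0) := by
          refine Finset.sum_le_sum fun j _ => ?_
          obtain ⟨p, hp⟩ := hcover j
          have h := Finset.single_le_sum
            (f := fun p => if j ∈ χ.Y p then (1 / (J : ℝ)) * c j else 0)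
            (fun q _ => by
              by_cases h : j ∈ χ.Y q
              · simp only [if_pos h]
                exact mul_nonneg (by positivity) (hc0 j)
              · simp [h]) (Finset.mem_univ p)
          simpa only [if_pos hp] using h
      _ = ∑ p, ∑ j, (if j ∈ χ.Y p then (1 / (J : ℝ)) * c j else 0) := Finset.sum_comm
      _ ≤ ∑ p, ((((J : ℝ≥0∞))⁻¹ • Measure.count : Measure (Fin J)) (χ.Y p)).toReal
            * ‖W.comp (proj (χ.Y p))‖ ^ 2 := Finset.sum_le_sum fun p _ => hpiece p
      _ = M _ proj W χ := rfl
  haveI : Nonempty (Partition (((J : ℝ≥0∞))⁻¹ • Measure.count : Measure (Fin J))) := ⟨χ₀⟩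
  have hmun : munorm _ proj W = Real.sqrt T := by
    refine le_antisymm ?_ ?_
    · refine ciInf_le_of_le ⟨0, ?_⟩ χ₀ (by rw [hM0])
      rintro x ⟨χ, rfl⟩
      exact Real.sqrt_nonneg _
    · exact le_ciInf fun χ => Real.sqrt_le_sqrt (hMlow χ)
  rw [hmun, Real.sq_sqrt hTnn]

end MuNorm
end

section
/- Suppose a cyclic group ℤ_q acts on the probability space (𝒳, ℬ, μ) by automorphisms F_s, and the action is almost free: there is a measurable set X such that the sets X_s = F_s(X), s ∈ ℤ_q, are pairwise disjoint and cover 𝒳 up to measure zero. Let H_n = {f ∈ L²(𝒳,μ) : U_s f = r^{ns} f for all s ∈ ℤ_q}, r = e^{2πi/q}, where U_s f = f ∘ F_s. Then the spaces H_n are pairwise orthogonal, L²(𝒳,μ) = ⊕_{n∈ℤ_q} H_n, and ‖π_{H_n}‖_μ² = 1/q for each n. -/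
open MeasureTheory
open scoped ENNReal NNReal

namespace MuNorm

variable {𝒳 : Type*} [MeasurableSpace 𝒳]

lemma Lp_coeFn_sum {ι : Type*} (μ : Measure 𝒳) (s : Finset ι) (f : ι → Lp ℂ 2 μ) :
    ((∑ i ∈ s, f i : Lp ℂ 2 μ) : 𝒳 → ℂ) =ᵐ[μ] fun x => ∑ i ∈ s, (f i : 𝒳 → ℂ) x := by
  induction s using Finset.cons_induction with
  | empty => simp only [Finset.sum_empty]; exact Lp.coeFn_zero (E := ℂ) (p := 2) (μ := μ)
  | cons i s hi ih =>
    rw [Finset.sum_cons]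
    filter_upwards [Lp.coeFn_add (f i) (∑ j ∈ s, f j), ih] with x h1 h2
    simp only [h1, Pi.add_apply, h2, Finset.sum_cons]

lemma inner_indicatorConst (μ : Measure 𝒳) {s t : Set 𝒳} (hs : MeasurableSet s)
    (ht : MeasurableSet t) (hμs : μ s ≠ ⊤) (hμt : μ t ≠ ⊤) :
    (inner ℂ (indicatorConstLp 2 hs hμs (1:ℂ)) (indicatorConstLp 2 ht hμt (1:ℂ)) : ℂ)
      = ((μ (s ∩ t)).toReal : ℂ) := by
  rw [L2.inner_def]
  have : (fun a => (inner ℂ ((indicatorConstLp 2 hs hμs (1:ℂ)) a)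
        ((indicatorConstLp 2 ht hμt (1:ℂ)) a) : ℂ))
      =ᵐ[μ] (s ∩ t).indicator (fun _ => (1:ℂ)) := by
    filter_upwards [indicatorConstLp_coeFn (μ := μ) (p := 2) (hs := hs) (hμs := hμs) (c := (1:ℂ)),
      indicatorConstLp_coeFn (μ := μ) (p := 2) (hs := ht) (hμs := hμt) (c := (1:ℂ))] with x h1 h2
    rw [h1, h2]
    by_cases hxs : x ∈ s <;> by_cases hxt : x ∈ t <;>
      simp [Set.indicator_apply, hxs, hxt, RCLike.inner_apply]
  rw [integral_congr_ae this, integral_indicator (hs.inter ht), setIntegral_const]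
  simp [measureReal_def]

lemma pow_val_mod (r : ℂ) (q : ℕ) (hr1 : r ^ q = 1) (m : ℕ) : r ^ (m % q) = r ^ m := by
  conv_rhs => rw [← Nat.div_add_mod m q]
  rw [pow_add, pow_mul, hr1, one_pow, one_mul]





lemma zmod_sum_pow (q : ℕ) [NeZero q] (x : ℂ) :
    ∑ n : ZMod q, x ^ (n.val) = ∑ i ∈ Finset.range q, x ^ i := by
  refine Finset.sum_nbij' (i := ZMod.val) (j := fun i : ℕ => (i : ZMod q))
    (fun a _ => Finset.mem_range.2 (ZMod.val_lt a)) (fun a _ => Finset.mem_univ _)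
    (fun a _ => ZMod.natCast_rightInverse a)
    (fun a ha => ZMod.val_natCast_of_lt (Finset.mem_range.1 ha)) (fun a _ => rfl)

lemma char_sum (r : ℂ) (q : ℕ) [NeZero q] (hr1 : r ^ q = 1)
    (hne1 : ∀ a : ZMod q, a ≠ 0 → r ^ a.val ≠ 1) (s : ZMod q) :
    ∑ n : ZMod q, r ^ ((n * s).val) = if s = 0 then (q : ℂ) else 0 := by
  have key : ∀ n : ZMod q, r ^ ((n * s).val) = (r ^ s.val) ^ n.val := by
    intro n
    rw [← pow_mul, ZMod.val_mul, pow_val_mod r q hr1, mul_comm]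
  rw [Finset.sum_congr rfl (fun n _ => key n), zmod_sum_pow]
  by_cases hs : s = 0
  · simp [hs]
  · rw [if_neg hs, geom_sum_eq (hne1 s hs) q, ← pow_mul, mul_comm, pow_mul, hr1, one_pow,
      sub_self, zero_div]


set_option maxHeartbeats 2000000 in
set_option synthInstance.maxHeartbeats 200000 in
theorem cyclic_action_eigenspaces (μ : Measure 𝒳) [IsProbabilityMeasure μ]
    (proj : Set 𝒳 → (Lp ℂ 2 μ →L[ℂ] Lp ℂ 2 μ))
    (hproj : IsIndicatorProj μ proj)
    (q : ℕ) (hq : 0 < q)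
    (F : ZMod q → 𝒳 ≃ᵐ 𝒳)
    (hFpres : ∀ s, MeasurePreserving (F s) μ μ)
    (hFadd : ∀ s s' : ZMod q, ∀ x, F (s + s') x = F s (F s' x))
    (X : Set 𝒳) (hX : MeasurableSet X)
    (hdisj : ∀ s s' : ZMod q, s ≠ s' → Disjoint (F s '' X) (F s' '' X))
    (hcover : μ (Set.univ \ ⋃ s : ZMod q, F s '' X) = 0)
    (U : ZMod q → (Lp ℂ 2 μ →L[ℂ] Lp ℂ 2 μ))
    (hU : ∀ s, ∀ f : Lp ℂ 2 μ, (U s f : 𝒳 → ℂ) =ᵐ[μ] fun x => f (F s x))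
    (r : ℂ) (hr : r = Complex.exp (2 * Real.pi * Complex.I / q))
    (H : ZMod q → Submodule ℂ (Lp ℂ 2 μ))
    (hH : ∀ n, (H n : Set (Lp ℂ 2 μ))
      = {f | ∀ s : ZMod q, U s f = r ^ ((n * s).val) • f}) :
    (∀ n m : ZMod q, n ≠ m → ∀ f ∈ H n, ∀ g ∈ H m, (inner ℂ f g : ℂ) = 0) ∧
    (⨆ n : ZMod q, H n) = ⊤ ∧
    (∀ n : ZMod q, ∀ P : Lp ℂ 2 μ →L[ℂ] Lp ℂ 2 μ,
      (∀ f, P f ∈ H n) → (∀ f ∈ H n, P f = f) →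
      (∀ f : Lp ℂ 2 μ, ∀ g ∈ H n, (inner ℂ (f - P f) g : ℂ) = 0) →
      munorm μ proj P ^ 2 = 1 / (q : ℝ)) := by
  haveI : NeZero q := ⟨hq.ne'⟩
  have hqR : (0:ℝ) < q := by exact_mod_cast hq
  have hqC : (q:ℂ) ≠ 0 := by exact_mod_cast hq.ne'
  -- facts about r
  have hprimroot : IsPrimitiveRoot r q := hr ▸ Complex.isPrimitiveRoot_exp q hq.ne'
  have hr1 : r ^ q = 1 := hprimroot.pow_eq_one
  have habs : ‖r‖ = 1 := by
    have : r = Complex.exp ((2 * Real.pi / q : ℝ) * Complex.I) := by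
      rw [hr]; congr 1; push_cast; ring
    rw [this, Complex.norm_exp_ofReal_mul_I]
  have hrnorm : ∀ k : ℕ, ‖r ^ k‖ = 1 := by
    intro k; rw [norm_pow, habs, one_pow]
  have hne1 : ∀ a : ZMod q, a ≠ 0 → r ^ a.val ≠ 1 := by
    intro a ha
    exact hprimroot.pow_ne_one_of_pos_of_lt
      (fun h => ha ((ZMod.val_eq_zero a).1 h)) (ZMod.val_lt a)
  have hadd : ∀ a b : ZMod q, r ^ ((a + b).val) = r ^ a.val * r ^ b.val := by
    intro a b; rw [ZMod.val_add, pow_val_mod r q hr1, pow_add]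
  have hrne0 : ∀ k : ℕ, r ^ k ≠ 0 := by
    intro k h
    have := hrnorm k
    rw [h, norm_zero] at this
    norm_num at this
  have hconj : ∀ a : ZMod q, (starRingEnd ℂ) (r ^ a.val) = r ^ ((-a).val) := by
    intro a
    have h1 : r ^ ((-a).val) * r ^ a.val = 1 := by
      rw [← hadd, neg_add_cancel, ZMod.val_zero, pow_zero]
    have h2 : (starRingEnd ℂ) (r ^ a.val) * r ^ a.val = 1 := by
      have := Complex.mul_conj (r ^ a.val)
      rw [mul_comm] at this
      rw [this, Complex.normSq_eq_norm_sq, norm_pow, habs]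
      norm_num
    exact mul_right_cancel₀ (hrne0 a.val) (h2.trans h1.symm)
  have hsum : ∀ s : ZMod q, ∑ m : ZMod q, r ^ ((m * s).val) = if s = 0 then (q : ℂ) else 0 :=
    char_sum r q hr1 hne1
  -- facts about F
  have hF0 : ∀ x, F (0 : ZMod q) x = x := by
    intro x
    have h := hFadd 0 0 x
    rw [add_zero] at h
    exact ((F 0).injective h).symm
  have himg : ∀ (s t : ZMod q) (S : Set 𝒳), F s '' (F t '' S) = F (s + t) '' S := by
    intro s t S
    rw [← Set.image_comp]
    exact Set.image_congr' (fun x => (hFadd s t x).symm)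
  have himgid : ∀ S : Set 𝒳, F (0 : ZMod q) '' S = S := by
    intro S
    exact (Set.image_congr' hF0).trans (Set.image_id' S)
  have himgpre : ∀ (s : ZMod q) (S : Set 𝒳), (F s) '' S = (F s).symm ⁻¹' S :=
    fun s S => congrFun (Set.image_eq_preimage_of_inverse (F s).symm_apply_apply (F s).apply_symm_apply) S
  have hμimg : ∀ (s : ZMod q) (S : Set 𝒳), μ (F s '' S) = μ S := by
    intro s S
    rw [himgpre, ← MeasurableEquiv.map_apply ((F s).symm), ((hFpres s).symm (F s)).map_eq]
  have hpreC : ∀ (t s : ZMod q) (S : Set 𝒳), F t ⁻¹' (F s '' S) = F (s - t) '' S := by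
    intro t s S
    have h1 : F s '' S = F t '' (F (s - t) '' S) := by
      rw [himg, add_sub_cancel]
    rw [h1, Set.preimage_image_eq _ (F t).injective]
  have hXs_meas : ∀ s : ZMod q, MeasurableSet (F s '' X) :=
    fun s => ((F s).measurableSet_image).2 hX
  have hdisjP : Pairwise (Function.onFun Disjoint fun s : ZMod q => F s '' X) :=
    fun a b hab => hdisj a b hab
  -- facts about U
  have hUcomp : ∀ (t s : ZMod q) (f : Lp ℂ 2 μ), U t (U s f) = U (s + t) f := by
    intro t s f
    apply Lp.ext
    have h1 : (U t (U s f) : 𝒳 → ℂ) =ᵐ[μ] fun x => (U s f : 𝒳 → ℂ) (F t x) := hU t (U s f)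
    have h2 : (fun x => (U s f : 𝒳 → ℂ) (F t x)) =ᵐ[μ] fun x => (f : 𝒳 → ℂ) (F s (F t x)) :=
      (hFpres t).quasiMeasurePreserving.ae_eq_comp (hU s f)
    have h3 : (fun x => (f : 𝒳 → ℂ) (F s (F t x))) = fun x => (f : 𝒳 → ℂ) (F (s + t) x) := by
      funext x; rw [hFadd]
    exact h1.trans (h2.trans (h3 ▸ (hU (s + t) f).symm))
  have hU0 : ∀ f : Lp ℂ 2 μ, U (0 : ZMod q) f = f := by
    intro f
    apply Lp.ext
    refine (hU 0 f).trans ?_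
    have : (fun x => (f : 𝒳 → ℂ) (F (0:ZMod q) x)) = fun x => (f : 𝒳 → ℂ) x := by
      funext x; rw [hF0]
    rw [this]
  have hUinner : ∀ (s : ZMod q) (f g : Lp ℂ 2 μ),
      (inner ℂ (U s f) (U s g) : ℂ) = inner ℂ f g := by
    intro s f g
    rw [L2.inner_def, L2.inner_def,
      ← MeasurePreserving.integral_comp (hFpres s) (F s).measurableEmbedding
        (fun x => (inner ℂ ((f : 𝒳 → ℂ) x) ((g : 𝒳 → ℂ) x) : ℂ))]
    apply integral_congr_ae
    filter_upwards [hU s f, hU s g] with x h1 h2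
    rw [h1, h2]
  have hmem : ∀ (n : ZMod q) (f : Lp ℂ 2 μ),
      f ∈ H n ↔ ∀ s : ZMod q, U s f = r ^ ((n * s).val) • f := by
    intro n f
    rw [← SetLike.mem_coe, hH n]
    exact Iff.rfl
  -- measure facts
  have hcup : μ (⋃ s : ZMod q, F s '' X) = 1 := by
    apply le_antisymm prob_le_one
    calc (1:ℝ≥0∞) = μ Set.univ := measure_univ.symm
      _ ≤ μ ((⋃ s : ZMod q, F s '' X) ∪ (Set.univ \ ⋃ s : ZMod q, F s '' X)) := by
          apply measure_mono
          intro x _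
          by_cases h : x ∈ ⋃ s : ZMod q, F s '' X
          · exact Or.inl h
          · exact Or.inr ⟨trivial, h⟩
      _ ≤ μ (⋃ s : ZMod q, F s '' X) + μ (Set.univ \ ⋃ s : ZMod q, F s '' X) :=
          measure_union_le _ _
      _ = μ (⋃ s : ZMod q, F s '' X) := by rw [hcover, add_zero]
  have hsumX : ∑ s : ZMod q, μ (F s '' X) = 1 := by
    rw [← tsum_fintype (L := SummationFilter.unconditional _), ← measure_iUnion hdisjP hXs_meas]
    exact hcup
  have hμX1 : (q : ℝ≥0∞) * μ X = 1 := by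
    rw [Finset.sum_congr rfl (fun s _ => hμimg s X), Finset.sum_const, Finset.card_univ,
      ZMod.card, nsmul_eq_mul] at hsumX
    exact hsumX
  have hμXval : μ X = (q : ℝ≥0∞)⁻¹ := by
    have hq0 : (q : ℝ≥0∞) ≠ 0 := by exact_mod_cast hq.ne'
    have hqt : (q : ℝ≥0∞) ≠ ⊤ := ENNReal.natCast_ne_top q
    rw [← one_mul (μ X), ← ENNReal.inv_mul_cancel hq0 hqt, mul_assoc, hμX1, mul_one]
  have htXs : ∀ s : ZMod q, (μ (F s '' X)).toReal = (q:ℝ)⁻¹ := by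
    intro s
    rw [hμimg s X, hμXval, ENNReal.toReal_inv]
    simp
  -- L² facts
  have hptnorm : ∀ w : Lp ℂ 2 μ, ‖w‖^2 = ∫ x, ‖(w : 𝒳 → ℂ) x‖^2 ∂μ := by
    intro w
    rw [@norm_sq_eq_re_inner ℂ, L2.inner_def, ← integral_re (L2.integrable_inner (𝕜 := ℂ) w w)]
    apply integral_congr_ae
    exact Filter.Eventually.of_forall fun x => (norm_sq_eq_re_inner (𝕜 := ℂ) _).symm
  have hps : ∀ (Y : Set 𝒳), MeasurableSet Y → ∀ w : Lp ℂ 2 μ,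
      ‖proj Y w‖^2 = ∫ x in Y, ‖(w : 𝒳 → ℂ) x‖^2 ∂μ := by
    intro Y hY w
    rw [hptnorm (proj Y w), ← integral_indicator hY]
    apply integral_congr_ae
    filter_upwards [hproj Y hY w] with x hx
    rw [hx]
    by_cases hxY : x ∈ Y
    · rw [Set.indicator_of_mem hxY, Set.indicator_of_mem hxY]
    · rw [Set.indicator_of_notMem hxY, Set.indicator_of_notMem hxY, norm_zero]
      norm_num
  have hmove : ∀ (Y : Set 𝒳), MeasurableSet Y → ∀ w v : Lp ℂ 2 μ,
      (inner ℂ w (proj Y v) : ℂ) = inner ℂ (proj Y w) v := by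
    intro Y hY w v
    rw [L2.inner_def, L2.inner_def]
    apply integral_congr_ae
    filter_upwards [hproj Y hY v, hproj Y hY w] with x h1 h2
    rw [h1, h2, RCLike.inner_apply', RCLike.inner_apply']
    by_cases hx : x ∈ Y
    · rw [Set.indicator_of_mem hx, Set.indicator_of_mem hx]
    · rw [Set.indicator_of_notMem hx, Set.indicator_of_notMem hx, map_zero, mul_zero, zero_mul]
  have hfrac : ∀ (n : ZMod q) (h : Lp ℂ 2 μ), h ∈ H n → ∀ s : ZMod q,
      ‖proj (F s '' X) h‖^2 = (q:ℝ)⁻¹ * ‖h‖^2 := by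
    intro n h hh s
    have hint : Integrable (fun x => ‖(h : 𝒳 → ℂ) x‖^2) μ := by
      have h2 := (Lp.memLp h).integrable_norm_rpow (by norm_num) (by norm_num)
      refine h2.congr (Filter.Eventually.of_forall fun x => ?_)
      norm_num
    have hIs : ∀ t : ZMod q, ∫ x in F t '' X, ‖(h : 𝒳 → ℂ) x‖^2 ∂μ
        = ∫ x in X, ‖(h : 𝒳 → ℂ) x‖^2 ∂μ := by
      intro t
      rw [MeasurePreserving.setIntegral_image_emb (hFpres t) (F t).measurableEmbedding]
      apply setIntegral_congr_ae hX
      have hae : (fun x => ‖(h : 𝒳 → ℂ) (F t x)‖^2) =ᵐ[μ] fun x => ‖(h : 𝒳 → ℂ) x‖^2 := by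
        have h2 : U t h = (r ^ ((n * t).val) : ℂ) • h := (hmem n h).1 hh t
        filter_upwards [hU t h, Lp.coeFn_smul (r ^ ((n * t).val) : ℂ) h] with x hx1 hx2
        have h3 : (h : 𝒳 → ℂ) (F t x) = r ^ ((n * t).val) * (h : 𝒳 → ℂ) x := by
          rw [← hx1, h2, hx2, Pi.smul_apply, smul_eq_mul]
        rw [h3, norm_mul, hrnorm, one_mul]
      exact hae.mono fun x hx _ => hx
    have hiUnion : ∫ x in ⋃ t : ZMod q, F t '' X, ‖(h : 𝒳 → ℂ) x‖^2 ∂μ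
        = ∑ t : ZMod q, ∫ x in F t '' X, ‖(h : 𝒳 → ℂ) x‖^2 ∂μ := by
      rw [integral_iUnion hXs_meas hdisjP hint.integrableOn, tsum_fintype]
    have htotal : ∫ x in ⋃ t : ZMod q, F t '' X, ‖(h : 𝒳 → ℂ) x‖^2 ∂μ
        = ∫ x, ‖(h : 𝒳 → ℂ) x‖^2 ∂μ := by
      rw [← integral_indicator (MeasurableSet.iUnion hXs_meas)]
      apply integral_congr_ae
      have hae2 : ∀ᵐ x ∂μ, x ∈ ⋃ t : ZMod q, F t '' X := by
        rw [ae_iff]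
        have hset : {x | ¬ x ∈ ⋃ t : ZMod q, F t '' X} = Set.univ \ ⋃ t : ZMod q, F t '' X := by
          ext x; simp
        rw [hset]
        exact hcover
      filter_upwards [hae2] with x hx
      rw [Set.indicator_of_mem hx]
    have hkey : (q:ℝ) * ∫ x in X, ‖(h : 𝒳 → ℂ) x‖^2 ∂μ = ‖h‖^2 := by
      rw [hptnorm h, ← htotal, hiUnion, Finset.sum_congr rfl (fun t _ => hIs t),
        Finset.sum_const, Finset.card_univ, ZMod.card, nsmul_eq_mul]
    rw [hps _ (hXs_meas s) h, hIs s, ← hkey]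
    field_simp
  -- three parts
  refine ⟨?_, ?_, ?_⟩
  · -- orthogonality
    intro n m hnm f hf g hg
    have hf1 := (hmem n f).1 hf 1
    have hg1 := (hmem m g).1 hg 1
    have e1 : (inner ℂ f g : ℂ) = r ^ (((m - n) : ZMod q).val) * inner ℂ f g := by
      conv_lhs => rw [← hUinner 1 f g, hf1, hg1, inner_smul_left, inner_smul_right, hconj]
      rw [← mul_assoc, ← hadd]
      congr 2
      ring
    have h2 : r ^ (((m - n) : ZMod q).val) ≠ 1 :=
      hne1 (m - n) (sub_ne_zero.2 (Ne.symm hnm))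
    have h3 : (r ^ (((m - n) : ZMod q).val) - 1) * inner ℂ f g = 0 := by
      rw [sub_mul, one_mul, ← e1, sub_self]
    rcases mul_eq_zero.1 h3 with h4 | h4
    · exact absurd (sub_eq_zero.1 h4) h2
    · exact h4
  · -- completeness
    rw [eq_top_iff]
    rintro f -
    have hel : ∀ m : ZMod q,
        ((q:ℂ)⁻¹ • ∑ s : ZMod q, r ^ ((-(m * s)).val) • U s f) ∈ H m := by
      intro m
      refine (hmem m _).2 fun t => ?_
      rw [_root_.map_smul, map_sum]
      simp only [_root_.map_smul]
      have hre : ∑ s : ZMod q, r ^ ((-(m * s)).val) • U t (U s f)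
          = r ^ ((m * t).val) • ∑ s : ZMod q, r ^ ((-(m * s)).val) • U s f := by
        rw [Finset.smul_sum]
        refine Fintype.sum_equiv (Equiv.addRight t) _ _ fun s => ?_
        simp only [Equiv.coe_addRight]
        rw [hUcomp t s f, smul_smul, ← hadd,
          show m * t + -(m * (s + t)) = -(m * s) from by ring]
      rw [hre]
      exact smul_comm _ _ _
    have hdecomp : f = ∑ m : ZMod q,
        ((q:ℂ)⁻¹ • ∑ s : ZMod q, r ^ ((-(m * s)).val) • U s f) := by
      rw [← Finset.smul_sum, Finset.sum_comm]
      have : ∀ s : ZMod q, ∑ m : ZMod q, r ^ ((-(m * s)).val) • U s f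
          = (∑ m : ZMod q, r ^ ((m * s).val)) • U s f := by
        intro s
        rw [Finset.sum_smul]
        rw [← Equiv.sum_comp (Equiv.neg (ZMod q)) (fun m => r ^ ((-(m * s)).val) • U s f)]
        refine Finset.sum_congr rfl fun m _ => ?_
        simp only [Equiv.neg_apply]
        congr 3
        ring
      rw [Finset.sum_congr rfl (fun s _ => this s)]
      rw [Finset.sum_congr rfl (fun s _ => by rw [hsum s])]
      have hite : ∀ s : ZMod q, ((if s = 0 then (q:ℂ) else 0) • U s f)
          = if s = 0 then (q:ℂ) • U s f else 0 := by
        intro s; split_ifs <;> simp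
      rw [Finset.sum_congr rfl (fun s _ => hite s),
        Finset.sum_ite_eq' Finset.univ (0 : ZMod q) (fun s => ((q:ℂ) • U s f)),
        if_pos (Finset.mem_univ _), hU0, smul_smul, inv_mul_cancel₀ hqC, one_smul]
    rw [hdecomp]
    exact Submodule.sum_mem _ fun m _ => (le_iSup H m) (hel m)
  · -- mu-norm
    intro n P hPmem hPid hPorth
    have hconjmul : ∀ a : ZMod q, (starRingEnd ℂ) (r ^ a.val) * r ^ a.val = 1 := by
      intro a; rw [hconj, ← hadd, neg_add_cancel, ZMod.val_zero, pow_zero]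
    have hPsq : ∀ w : Lp ℂ 2 μ, (inner ℂ (P w) w : ℂ) = inner ℂ (P w) (P w) := by
      intro w
      have h0 : (inner ℂ (w - P w) (P w) : ℂ) = 0 := hPorth w (P w) (hPmem w)
      have h1 : (inner ℂ (P w) (w - P w) : ℂ) = 0 := inner_eq_zero_symm.1 h0
      rw [inner_sub_right] at h1
      exact (sub_eq_zero.1 h1)
    have hPinner : ∀ (w h : Lp ℂ 2 μ), h ∈ H n → (inner ℂ h w : ℂ) = inner ℂ h (P w) := by
      intro w h hh
      have h0 : (inner ℂ (w - P w) h : ℂ) = 0 := hPorth w h hh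
      have h1 : (inner ℂ h (w - P w) : ℂ) = 0 := inner_eq_zero_symm.1 h0
      rw [inner_sub_right] at h1
      exact (sub_eq_zero.1 h1)
    -- upper bound on each piece X_s
    have hupper : ∀ (s : ZMod q) (v : Lp ℂ 2 μ),
        ‖P (proj (F s '' X) v)‖ ≤ Real.sqrt (q:ℝ)⁻¹ * ‖v‖ := by
      intro s v
      have h2 : (inner ℂ (P (proj (F s '' X) v)) (proj (F s '' X) v) : ℂ)
          = inner ℂ (proj (F s '' X) (P (proj (F s '' X) v))) v :=
        hmove _ (hXs_meas s) _ v
      have h3 : ‖P (proj (F s '' X) v)‖^2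
          ≤ ‖proj (F s '' X) (P (proj (F s '' X) v))‖ * ‖v‖ := by
        calc ‖P (proj (F s '' X) v)‖^2
            = RCLike.re (inner ℂ (P (proj (F s '' X) v)) (P (proj (F s '' X) v)) : ℂ) :=
              norm_sq_eq_re_inner _
          _ = RCLike.re (inner ℂ (proj (F s '' X) (P (proj (F s '' X) v))) v : ℂ) := by
              rw [← hPsq _, h2]
          _ ≤ ‖(inner ℂ (proj (F s '' X) (P (proj (F s '' X) v))) v : ℂ)‖ := RCLike.re_le_norm _
          _ ≤ ‖proj (F s '' X) (P (proj (F s '' X) v))‖ * ‖v‖ := norm_inner_le_norm _ _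
      have h4 : ‖proj (F s '' X) (P (proj (F s '' X) v))‖
          = Real.sqrt (q:ℝ)⁻¹ * ‖P (proj (F s '' X) v)‖ := by
        have h5 := hfrac n (P (proj (F s '' X) v)) (hPmem _) s
        have h6 : ‖proj (F s '' X) (P (proj (F s '' X) v))‖
            = Real.sqrt ((q:ℝ)⁻¹ * ‖P (proj (F s '' X) v)‖^2) := by
          rw [← h5, Real.sqrt_sq (norm_nonneg _)]
        rw [h6, Real.sqrt_mul (by positivity), Real.sqrt_sq (norm_nonneg _)]
      rw [h4] at h3
      rcases eq_or_lt_of_le (norm_nonneg (P (proj (F s '' X) v))) with h0 | h0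
      · rw [← h0]; positivity
      · nlinarith [h3, h0]
    -- lower bound on each set of positive measure
    have hlower : ∀ Y : Set 𝒳, MeasurableSet Y → μ Y ≠ 0 →
        Real.sqrt (q:ℝ)⁻¹ ≤ ‖P.comp (proj Y)‖ := by
      intro Y hY hY0
      have hex : ∃ s₀ : ZMod q, μ (Y ∩ (F s₀ '' X)) ≠ 0 := by
        by_contra hall
        push_neg at hall
        apply hY0
        have hsub : Y ⊆ (⋃ s : ZMod q, Y ∩ (F s '' X))
            ∪ (Set.univ \ ⋃ s : ZMod q, F s '' X) := by
          intro x hx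
          by_cases hx2 : x ∈ ⋃ s : ZMod q, F s '' X
          · left
            simp only [Set.mem_iUnion] at hx2 ⊢
            obtain ⟨s, hs⟩ := hx2
            exact ⟨s, hx, hs⟩
          · exact Or.inr ⟨trivial, hx2⟩
        exact measure_mono_null hsub (measure_union_null (measure_iUnion_null hall) hcover)
      obtain ⟨s₀, hs₀⟩ := hex
      set B := Y ∩ (F s₀ '' X) with hBdef
      have hBmeas : MeasurableSet B := hY.inter (hXs_meas s₀)
      have hBfin : μ B ≠ ⊤ := measure_ne_top μ B
      have hBsubY : B ⊆ Y := Set.inter_subset_left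
      have hBsubX : B ⊆ F s₀ '' X := Set.inter_subset_right
      have hb : 0 < (μ B).toReal := ENNReal.toReal_pos hs₀ hBfin
      set b := (μ B).toReal with hbdef
      set C : ZMod q → Set 𝒳 := fun s => F (s - s₀) '' B with hCdef
      have hCmeas : ∀ s, MeasurableSet (C s) :=
        fun s => ((F (s - s₀)).measurableSet_image).2 hBmeas
      have hCfin : ∀ s, μ (C s) ≠ ⊤ := fun s => measure_ne_top μ _
      have hCμ : ∀ s, μ (C s) = μ B := fun s => hμimg _ _
      have hCs₀ : C s₀ = B := by
        rw [hCdef]; simp only [sub_self]; exact himgid B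
      have hCsub : ∀ s, C s ⊆ F s '' X := by
        intro s
        calc C s ⊆ F (s - s₀) '' (F s₀ '' X) := Set.image_mono hBsubX
          _ = F (s - s₀ + s₀) '' X := himg _ _ _
          _ = F s '' X := by rw [sub_add_cancel]
      have hCdisj : ∀ s t : ZMod q, s ≠ t → C s ∩ C t = ∅ :=
        fun s t hst => Set.disjoint_iff_inter_eq_empty.1
          ((hdisj s t hst).mono (hCsub s) (hCsub t))
      have hCpre : ∀ t s : ZMod q, F t ⁻¹' (C s) = C (s - t) := by
        intro t s
        rw [hCdef]
        simp only
        rw [hpreC, sub_right_comm]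
      set g : Lp ℂ 2 μ :=
        ∑ s : ZMod q, (r ^ ((n * s).val) : ℂ) • (indicatorConstLp 2 (hCmeas s) (hCfin s) (1:ℂ))
        with hgdef
      set G : 𝒳 → ℂ :=
        fun x => ∑ s : ZMod q, r ^ ((n * s).val) * (C s).indicator (fun _ => (1:ℂ)) x with hGdef
      have hgG : (g : 𝒳 → ℂ) =ᵐ[μ] G := by
        refine (Lp_coeFn_sum μ Finset.univ _).trans ?_
        have hall : ∀ᵐ x ∂μ, ∀ s : ZMod q,
            ((((r ^ ((n * s).val) : ℂ) • indicatorConstLp 2 (hCmeas s) (hCfin s) (1:ℂ) :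
              Lp ℂ 2 μ)) : 𝒳 → ℂ) x
              = r ^ ((n * s).val) * (C s).indicator (fun _ => (1:ℂ)) x := by
          rw [MeasureTheory.ae_all_iff]
          intro s
          filter_upwards [Lp.coeFn_smul (r ^ ((n * s).val) : ℂ)
              (indicatorConstLp 2 (hCmeas s) (hCfin s) (1:ℂ)),
            indicatorConstLp_coeFn (μ := μ) (p := 2) (hs := hCmeas s) (hμs := hCfin s)
              (c := (1:ℂ))] with x h1 h2
          simp only [h1, Pi.smul_apply, smul_eq_mul, h2]
        filter_upwards [hall] with x hx
        simp only [hGdef]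
        exact Finset.sum_congr rfl fun s _ => hx s
      have hgH : g ∈ H n := by
        refine (hmem n g).2 fun t => ?_
        apply Lp.ext
        have h3 : ∀ x, G (F t x) = r ^ ((n * t).val) * G x := by
          intro x
          rw [hGdef]
          simp only
          rw [Finset.mul_sum]
          refine Fintype.sum_equiv (Equiv.subRight t) _ _ fun s => ?_
          simp only [Equiv.subRight_apply]
          have hind : (C s).indicator (fun _ => (1:ℂ)) (F t x)
              = (C (s - t)).indicator (fun _ => (1:ℂ)) x := by
            rw [← hCpre t s]; rfl
          rw [hind, ← mul_assoc, ← hadd, show n * t + n * (s - t) = n * s from by ring]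
        calc (U t g : 𝒳 → ℂ) =ᵐ[μ] fun x => (g : 𝒳 → ℂ) (F t x) := hU t g
          _ =ᵐ[μ] fun x => G (F t x) := (hFpres t).quasiMeasurePreserving.ae_eq_comp hgG
          _ =ᵐ[μ] fun x => r ^ ((n * t).val) * G x := Filter.Eventually.of_forall fun x => h3 x
          _ =ᵐ[μ] fun x => r ^ ((n * t).val) * (g : 𝒳 → ℂ) x := by
              filter_upwards [hgG] with x hx; rw [hx]
          _ =ᵐ[μ] ((r ^ ((n * t).val) : ℂ) • g : Lp ℂ 2 μ) := by
              filter_upwards [Lp.coeFn_smul (r ^ ((n * t).val) : ℂ) g] with x hx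
              rw [hx, Pi.smul_apply, smul_eq_mul]
      have hindconst : ∀ s t : ZMod q,
          (inner ℂ (indicatorConstLp 2 (hCmeas s) (hCfin s) (1:ℂ))
            (indicatorConstLp 2 (hCmeas t) (hCfin t) (1:ℂ)) : ℂ)
          = ((μ (C s ∩ C t)).toReal : ℂ) :=
        fun s t => inner_indicatorConst μ (hCmeas s) (hCmeas t) (hCfin s) (hCfin t)
      have hginner : (inner ℂ g g : ℂ) = (((q : ℝ) * b : ℝ) : ℂ) := by
        rw [hgdef, sum_inner]
        have hrow : ∀ s : ZMod q,
            (inner ℂ ((r ^ ((n * s).val) : ℂ) • indicatorConstLp 2 (hCmeas s) (hCfin s) (1:ℂ))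
              (∑ t : ZMod q, (r ^ ((n * t).val) : ℂ) •
                indicatorConstLp 2 (hCmeas t) (hCfin t) (1:ℂ)) : ℂ) = (b:ℂ) := by
          intro s
          rw [inner_sum, Finset.sum_eq_single s]
          · rw [inner_smul_left, inner_smul_right, hindconst s s, Set.inter_self, hCμ s,
              ← mul_assoc, hconjmul, one_mul]
          · intro t _ hts
            rw [inner_smul_left, inner_smul_right, hindconst s t, hCdisj s t (Ne.symm hts)]
            simp
          · intro hmem'
            exact absurd (Finset.mem_univ s) hmem'
        rw [Finset.sum_congr rfl (fun s _ => hrow s), Finset.sum_const, Finset.card_univ,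
          ZMod.card, nsmul_eq_mul]
        push_cast
        ring
      have hgnorm : ‖g‖ = Real.sqrt ((q:ℝ) * b) := by
        have h1 : ‖g‖^2 = (q:ℝ) * b := by
          rw [@norm_sq_eq_re_inner ℂ, hginner]
          simp
        rw [← h1, Real.sqrt_sq (norm_nonneg _)]
      set u : Lp ℂ 2 μ := indicatorConstLp 2 hBmeas hBfin (1:ℂ) with hudef
      have hunorm : ‖u‖ = Real.sqrt b := by
        rw [hudef, norm_indicatorConstLp (by norm_num) (by norm_num), Real.sqrt_eq_rpow]
        norm_num [measureReal_def, hbdef]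
      have hprojYu : proj Y u = u := by
        apply Lp.ext
        filter_upwards [hproj Y hY u, indicatorConstLp_coeFn (μ := μ) (p := 2)
          (hs := hBmeas) (hμs := hBfin) (c := (1:ℂ))] with x h1 h2
        rw [h1]
        by_cases hx : x ∈ Y
        · rw [Set.indicator_of_mem hx]
        · rw [Set.indicator_of_notMem hx, h2,
            Set.indicator_of_notMem (fun hxB => hx (hBsubY hxB))]
      have hinnergu : (inner ℂ g u : ℂ) = (starRingEnd ℂ) (r ^ ((n * s₀).val)) * (b:ℂ) := by
        rw [hgdef, hudef, sum_inner, Finset.sum_eq_single s₀]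
        · rw [inner_smul_left,
            inner_indicatorConst μ (hCmeas s₀) hBmeas (hCfin s₀) hBfin, hCs₀, Set.inter_self]
        · intro t _ hts
          rw [inner_smul_left, inner_indicatorConst μ (hCmeas t) hBmeas (hCfin t) hBfin]
          have hemp : C t ∩ B = ∅ := by rw [← hCs₀]; exact hCdisj t s₀ hts
          rw [hemp]
          simp
        · intro hmem'
          exact absurd (Finset.mem_univ s₀) hmem'
      have hgpos : 0 < ‖g‖ := by
        rw [hgnorm]
        apply Real.sqrt_pos.2
        positivity
      have hfH : ((‖g‖:ℂ))⁻¹ • g ∈ H n := Submodule.smul_mem _ _ hgH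
      have hfnorm : ‖((‖g‖:ℂ))⁻¹ • g‖ = 1 := by
        rw [norm_smul, norm_inv, Complex.norm_real, Real.norm_eq_abs,
          abs_of_nonneg (norm_nonneg g)]
        exact inv_mul_cancel₀ hgpos.ne'
      have hsb : Real.sqrt b * Real.sqrt b = b := Real.mul_self_sqrt hb.le
      have hsqbp : 0 < Real.sqrt b := Real.sqrt_pos.2 hb
      have hsqqp : 0 < Real.sqrt (q:ℝ) := Real.sqrt_pos.2 hqR
      have hfu : ‖(inner ℂ (((‖g‖:ℂ))⁻¹ • g) u : ℂ)‖ = Real.sqrt (q:ℝ)⁻¹ * Real.sqrt b := by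
        rw [inner_smul_left, hinnergu, norm_mul, norm_mul, RCLike.norm_conj,
          RCLike.norm_conj, norm_inv, Complex.norm_real, Real.norm_eq_abs,
          abs_of_nonneg (norm_nonneg g), hrnorm, one_mul, Complex.norm_real, Real.norm_eq_abs, abs_of_nonneg hb.le,
          hgnorm, Real.sqrt_mul hqR.le, Real.sqrt_inv, mul_inv, mul_assoc]
        congr 1
        field_simp
        rw [Real.sq_sqrt hb.le]
      have hPuineq : Real.sqrt (q:ℝ)⁻¹ * Real.sqrt b ≤ ‖P u‖ := by
        have h1 : (inner ℂ (((‖g‖:ℂ))⁻¹ • g) u : ℂ) = inner ℂ (((‖g‖:ℂ))⁻¹ • g) (P u) :=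
          hPinner u _ hfH
        calc Real.sqrt (q:ℝ)⁻¹ * Real.sqrt b
            = ‖(inner ℂ (((‖g‖:ℂ))⁻¹ • g) u : ℂ)‖ := hfu.symm
          _ = ‖(inner ℂ (((‖g‖:ℂ))⁻¹ • g) (P u) : ℂ)‖ := by rw [h1]
          _ ≤ ‖((‖g‖:ℂ))⁻¹ • g‖ * ‖P u‖ := norm_inner_le_norm _ _
          _ = ‖P u‖ := by rw [hfnorm, one_mul]
      have hupos : 0 < ‖u‖ := by rw [hunorm]; exact hsqbp
      have h2 : Real.sqrt (q:ℝ)⁻¹ * ‖u‖ ≤ ‖(P.comp (proj Y)) u‖ := by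
        rw [ContinuousLinearMap.comp_apply, hprojYu, hunorm]
        exact hPuineq
      calc Real.sqrt (q:ℝ)⁻¹ = (Real.sqrt (q:ℝ)⁻¹ * ‖u‖) / ‖u‖ := by
            field_simp
        _ ≤ ‖(P.comp (proj Y)) u‖ / ‖u‖ := by gcongr
        _ ≤ ‖P.comp (proj Y)‖ := ContinuousLinearMap.ratio_le_opNorm _ u
    -- lower bound for every partition
    have hMlow : ∀ χ : Partition μ, (q:ℝ)⁻¹ ≤ M μ proj P χ := by
      intro χ
      have hterm : ∀ j : Fin χ.J,
          (q:ℝ)⁻¹ * (μ (χ.Y j)).toReal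
            ≤ (μ (χ.Y j)).toReal * ‖P.comp (proj (χ.Y j))‖^2 := by
        intro j
        rcases eq_or_ne (μ (χ.Y j)) 0 with h0 | h0
        · simp only [h0, ENNReal.toReal_zero, mul_zero, zero_mul]
          exact le_refl 0
        · have h1 := hlower (χ.Y j) (χ.meas j) h0
          have h2 : (q:ℝ)⁻¹ ≤ ‖P.comp (proj (χ.Y j))‖^2 := by
            have h3 := pow_le_pow_left₀ (Real.sqrt_nonneg _) h1 2
            rwa [Real.sq_sqrt (by positivity)] at h3
          calc (q:ℝ)⁻¹ * (μ (χ.Y j)).toReal = (μ (χ.Y j)).toReal * (q:ℝ)⁻¹ := mul_comm _ _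
            _ ≤ (μ (χ.Y j)).toReal * ‖P.comp (proj (χ.Y j))‖^2 :=
                mul_le_mul_of_nonneg_left h2 ENNReal.toReal_nonneg
      have huni : μ (⋃ j, χ.Y j) = 1 := by
        apply le_antisymm prob_le_one
        calc (1:ℝ≥0∞) = μ Set.univ := measure_univ.symm
          _ ≤ μ ((⋃ j, χ.Y j) ∪ (Set.univ \ ⋃ j, χ.Y j)) := by
              apply measure_mono
              intro x _
              by_cases h : x ∈ ⋃ j, χ.Y j
              · exact Or.inl h
              · exact Or.inr ⟨trivial, h⟩
          _ ≤ μ (⋃ j, χ.Y j) + μ (Set.univ \ ⋃ j, χ.Y j) := measure_union_le _ _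
          _ = μ (⋃ j, χ.Y j) := by rw [χ.cover, add_zero]
      have hsumY : 1 ≤ ∑ j : Fin χ.J, (μ (χ.Y j)).toReal := by
        have h2 : (1:ℝ≥0∞) ≤ ∑ j, μ (χ.Y j) := huni ▸ measure_iUnion_fintype_le μ χ.Y
        have hfin : ∀ j ∈ Finset.univ (α := Fin χ.J), μ (χ.Y j) ≠ ⊤ :=
          fun j _ => measure_ne_top μ _
        have h3 : ((1:ℝ≥0∞)).toReal ≤ (∑ j, μ (χ.Y j)).toReal :=
          ENNReal.toReal_mono (by
            rw [ne_eq, ENNReal.sum_eq_top]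
            push_neg
            exact fun j _ => measure_ne_top μ _) h2
        rw [ENNReal.toReal_one, ENNReal.toReal_sum hfin] at h3
        exact h3
      calc (q:ℝ)⁻¹ = (q:ℝ)⁻¹ * 1 := (mul_one _).symm
        _ ≤ (q:ℝ)⁻¹ * ∑ j, (μ (χ.Y j)).toReal :=
            mul_le_mul_of_nonneg_left hsumY (by positivity)
        _ = ∑ j, (q:ℝ)⁻¹ * (μ (χ.Y j)).toReal := Finset.mul_sum _ _ _
        _ ≤ ∑ j, (μ (χ.Y j)).toReal * ‖P.comp (proj (χ.Y j))‖^2 :=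
            Finset.sum_le_sum fun j _ => hterm j
        _ = M μ proj P χ := rfl
    -- the canonical partition
    have hcoeval : ∀ j : Fin q, (((j : ℕ) : ZMod q)).val = (j : ℕ) :=
      fun j => ZMod.val_natCast_of_lt j.isLt
    set χ₀ : Partition μ := {
      J := q
      Y := fun j => F ((j : ℕ) : ZMod q) '' X
      meas := fun j => hXs_meas _
      cover := by
        have hequ : (⋃ j : Fin q, F ((j : ℕ) : ZMod q) '' X) = ⋃ s : ZMod q, F s '' X := by
          apply Set.Subset.antisymm
          · exact Set.iUnion_subset fun j => Set.subset_iUnion (fun s : ZMod q => F s '' X) _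
          · refine Set.iUnion_subset fun s => ?_
            intro x hx
            refine Set.mem_iUnion.2 ⟨⟨s.val, ZMod.val_lt s⟩, ?_⟩
            rw [show ((((⟨s.val, ZMod.val_lt s⟩ : Fin q) : ℕ)) : ZMod q) = s from
              ZMod.natCast_rightInverse s]
            exact hx
        rw [hequ]
        exact hcover
      disj := fun j k hjk => by
        have hne : ((j:ℕ) : ZMod q) ≠ ((k:ℕ) : ZMod q) := by
          intro hcontra
          apply hjk
          apply Fin.ext
          have h2 := congrArg ZMod.val hcontra
          rwa [hcoeval, hcoeval] at h2
        rw [Set.disjoint_iff_inter_eq_empty.1 (hdisj _ _ hne), measure_empty] } with hχ₀def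
    have hM0 : M μ proj P χ₀ ≤ (q:ℝ)⁻¹ := by
      have hterm : ∀ j : Fin q,
          (μ (F ((j:ℕ) : ZMod q) '' X)).toReal * ‖P.comp (proj (F ((j:ℕ):ZMod q) '' X))‖^2
            ≤ (q:ℝ)⁻¹ * (q:ℝ)⁻¹ := by
        intro j
        have h2 : ‖P.comp (proj (F ((j:ℕ):ZMod q) '' X))‖ ≤ Real.sqrt (q:ℝ)⁻¹ :=
          ContinuousLinearMap.opNorm_le_bound _ (Real.sqrt_nonneg _) fun v => by
            rw [ContinuousLinearMap.comp_apply]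
            exact hupper _ v
        have h3 : ‖P.comp (proj (F ((j:ℕ):ZMod q) '' X))‖^2 ≤ (q:ℝ)⁻¹ := by
          have h4 := pow_le_pow_left₀ (norm_nonneg _) h2 2
          rwa [Real.sq_sqrt (by positivity)] at h4
        rw [htXs]
        exact mul_le_mul_of_nonneg_left h3 (by positivity)
      have hMeq : M μ proj P χ₀
          = ∑ j : Fin q,
              (μ (F ((j:ℕ) : ZMod q) '' X)).toReal
                * ‖P.comp (proj (F ((j:ℕ):ZMod q) '' X))‖^2 := rfl
      rw [hMeq]
      calc (∑ j : Fin q, (μ (F ((j:ℕ) : ZMod q) '' X)).toReal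
              * ‖P.comp (proj (F ((j:ℕ):ZMod q) '' X))‖^2)
          ≤ ∑ _j : Fin q, (q:ℝ)⁻¹ * (q:ℝ)⁻¹ := Finset.sum_le_sum fun j _ => hterm j
        _ = (q:ℝ) * ((q:ℝ)⁻¹ * (q:ℝ)⁻¹) := by
            rw [Finset.sum_const, Finset.card_univ, Fintype.card_fin, nsmul_eq_mul]
        _ = (q:ℝ)⁻¹ := by field_simp
    have hmu : munorm μ proj P = Real.sqrt (q:ℝ)⁻¹ := by
      haveI : Nonempty (Partition μ) := ⟨χ₀⟩
      apply le_antisymm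
      · refine le_trans (ciInf_le ⟨0, ?_⟩ χ₀) (Real.sqrt_le_sqrt hM0)
        rintro x ⟨χ, rfl⟩
        exact Real.sqrt_nonneg _
      · exact le_ciInf fun χ => Real.sqrt_le_sqrt (hMlow χ)
    rw [hmu, Real.sq_sqrt (by positivity : (0:ℝ) ≤ (q:ℝ)⁻¹), one_div]


end MuNorm
end
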